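/- arXiv:2508.06927 — 6 statements merged into one kernel-verified Lean document; each statement's English description precedes it below -/
import Mathlib

section
/- (Curve construction from the proof of Theorem 3.1) Let B be a nonempty finite index set and for each j ∈ B let q_j : ℝⁿ → ℝ be twice continuously differentiable. Let x ∈ ℝⁿ and v ∈ ℝⁿ be such that q_j(x) = 0 and ⟨∇q_j(x), v⟩ = 0 for all j ∈ B, and the family {∇q_j(x) : j ∈ B} is linearly independent. Then there exist t̄ > 0 and a continuously differentiable curve x̃ : (−t̄, t̄) → ℝⁿ such that x̃(0) = x, x̃′(0) = v, and q_j(x̃(t)) = 0 for all t ∈ (−t̄, t̄) and all j ∈ B. -/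
open Filter Topology Metric Set
open scoped RealInnerProductSpace

noncomputable section

/-- The Bouligand (contingent) tangent cone to `s` at `x`. -/
def BCone {V : Type*} [NormedAddCommGroup V] [NormedSpace ℝ V] (s : Set V) (x : V) : Set V :=
  {u | ∃ (t : ℕ → ℝ) (c : ℕ → V), (∀ k, 0 < t k) ∧ Filter.Tendsto t Filter.atTop (𝓝 0) ∧
    Filter.Tendsto c Filter.atTop (𝓝 u) ∧ ∀ k, x + t k • c k ∈ s}

/-- The (convex) normal cone to `K` at `w`; empty when `w ∉ K`. -/
def NCone {V : Type*} [NormedAddCommGroup V] [InnerProductSpace ℝ V] (K : Set V) (w : V) :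
    Set V :=
  {z | w ∈ K ∧ ∀ y ∈ K, ⟪z, y - w⟫ ≤ 0}

variable {n : ℕ} {ι : Type*} [Fintype ι] [DecidableEq ι]

/-- The feasible set `Γ` of the nonlinear program. -/
def Feas (E I : Finset ι) (q : ι → EuclideanSpace ℝ (Fin n) → ℝ) :
    Set (EuclideanSpace ℝ (Fin n)) :=
  {x | (∀ i ∈ E, q i x = 0) ∧ ∀ i ∈ I, q i x ≤ 0}

/-- The set of active inequality constraints at `x`. -/
def ActiveI (I : Finset ι) (q : ι → EuclideanSpace ℝ (Fin n) → ℝ)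
    (x : EuclideanSpace ℝ (Fin n)) : Finset ι :=
  I.filter fun i => q i x = 0

/-- The Lagrange multiplier set `Λ(x, x*)`. -/
def Mult (I : Finset ι) (q : ι → EuclideanSpace ℝ (Fin n) → ℝ)
    (x xs : EuclideanSpace ℝ (Fin n)) : Set (EuclideanSpace ℝ ι) :=
  {lam | ∑ i, lam i • gradient (q i) x = xs ∧ ∀ i ∈ I, 0 ≤ lam i ∧ lam i * q i x = 0}

/-- `I⁺(λ)`: the inequality indices with positive multiplier. -/
def IplusF (I : Finset ι) (lam : EuclideanSpace ℝ ι) : Finset ι :=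
  I.filter fun i => 0 < lam i

/-- `I⁺(x, x*) = ∪_{λ ∈ Λ(x,x*)} I⁺(λ)`. -/
def IplusSet (I : Finset ι) (q : ι → EuclideanSpace ℝ (Fin n) → ℝ)
    (x xs : EuclideanSpace ℝ (Fin n)) : Set ι :=
  {i | ∃ lam ∈ Mult I q x xs, i ∈ IplusF I lam}

/-- Rank of the family of gradients `{∇q_i(x) : i ∈ s}`. -/
def RankAt (q : ι → EuclideanSpace ℝ (Fin n) → ℝ) (s : Finset ι)
    (x : EuclideanSpace ℝ (Fin n)) : ℕ :=
  Module.finrank ℝ (Submodule.span ℝ ((fun i => gradient (q i) x) '' ↑s))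

/-- The relaxed constant rank constraint qualification at `xbar`. -/
def RCRCQat (E I : Finset ι) (q : ι → EuclideanSpace ℝ (Fin n) → ℝ)
    (xbar : EuclideanSpace ℝ (Fin n)) : Prop :=
  ∃ U ∈ 𝓝 xbar, ∀ J ⊆ ActiveI I q xbar, ∀ x ∈ U, ∀ y ∈ U,
    RankAt q (E ∪ J) x = RankAt q (E ∪ J) y

/-- The set `Θ = {0}^E × ℝ₋^I`. -/
def Theta (E I : Finset ι) : Set (EuclideanSpace ℝ ι) :=
  {y | (∀ i ∈ E, y i = 0) ∧ ∀ i ∈ I, y i ≤ 0}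

/-- The metric subregularity constraint qualification at `x` with modulus `κ`. -/
def MSCQat (E I : Finset ι) (q : ι → EuclideanSpace ℝ (Fin n) → ℝ)
    (x : EuclideanSpace ℝ (Fin n)) (κ : ℝ) : Prop :=
  ∃ U ∈ 𝓝 x, ∀ u ∈ U,
    Metric.infDist u (Feas E I q) ≤
      κ * Metric.infDist (show EuclideanSpace ℝ ι from WithLp.toLp 2 (fun i => q i u)) (Theta E I)

/-- The critical cone `K(x, x*) = T_Γ(x) ∩ {x*}^⊥`. -/
def Crit (E I : Finset ι) (q : ι → EuclideanSpace ℝ (Fin n) → ℝ)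
    (x xs : EuclideanSpace ℝ (Fin n)) : Set (EuclideanSpace ℝ (Fin n)) :=
  BCone (Feas E I q) x ∩ {v | ⟪xs, v⟫ = 0}

/-- Hessian of `f` at `x` applied to `w` (derivative of the gradient map). -/
def HessApp (f : EuclideanSpace ℝ (Fin n) → ℝ) (x w : EuclideanSpace ℝ (Fin n)) :
    EuclideanSpace ℝ (Fin n) :=
  fderiv ℝ (fun y => gradient f y) x w

/-- `∇²⟨λ, q⟩(x) w = Σ_i λ_i ∇²q_i(x) w`. -/
def HessComb (q : ι → EuclideanSpace ℝ (Fin n) → ℝ) (lam : EuclideanSpace ℝ ι)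
    (x w : EuclideanSpace ℝ (Fin n)) : EuclideanSpace ℝ (Fin n) :=
  ∑ i, lam i • HessApp (q i) x w

/-- The quadratic form `⟨v, ∇²⟨λ,q⟩(x) v⟩`. -/
def QuadComb (q : ι → EuclideanSpace ℝ (Fin n) → ℝ) (lam : EuclideanSpace ℝ ι)
    (x v : EuclideanSpace ℝ (Fin n)) : ℝ :=
  ⟪v, HessComb q lam x v⟫

/-- `Λ(x, x*; v)`: the argmax of the quadratic form over `Λ(x, x*)`. -/
def MultArgmax (I : Finset ι) (q : ι → EuclideanSpace ℝ (Fin n) → ℝ)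
    (x xs v : EuclideanSpace ℝ (Fin n)) : Set (EuclideanSpace ℝ ι) :=
  {lam ∈ Mult I q x xs | ∀ mu ∈ Mult I q x xs, QuadComb q mu x v ≤ QuadComb q lam x v}

/-- The set `G = {(u, u*) : u ∈ Γ, Λ(u, u*) ≠ ∅}`. -/
def GSet (E I : Finset ι) (q : ι → EuclideanSpace ℝ (Fin n) → ℝ) :
    Set (EuclideanSpace ℝ (Fin n) × EuclideanSpace ℝ (Fin n)) :=
  {p | p.1 ∈ Feas E I q ∧ (Mult I q p.1 p.2).Nonempty}

/-- Argmin set of the tilted problem `M_γ(v)`. -/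
def MArgmin (φ : EuclideanSpace ℝ (Fin n) → ℝ) (Γ : Set (EuclideanSpace ℝ (Fin n)))
    (xbar : EuclideanSpace ℝ (Fin n)) (γ : ℝ) (v : EuclideanSpace ℝ (Fin n)) :
    Set (EuclideanSpace ℝ (Fin n)) :=
  {x ∈ Γ ∩ Metric.closedBall xbar γ |
    ∀ y ∈ Γ ∩ Metric.closedBall xbar γ, φ x - ⟪v, x⟫ ≤ φ y - ⟪v, y⟫}

/-- Tilt-stable local minimizer with modulus `κ`. -/
def TiltStableWith (φ : EuclideanSpace ℝ (Fin n) → ℝ) (Γ : Set (EuclideanSpace ℝ (Fin n)))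
    (xbar : EuclideanSpace ℝ (Fin n)) (κ : ℝ) : Prop :=
  ∃ γ > (0:ℝ), ∃ W ∈ 𝓝 (0 : EuclideanSpace ℝ (Fin n)),
    ∃ m : EuclideanSpace ℝ (Fin n) → EuclideanSpace ℝ (Fin n),
      m 0 = xbar ∧ (∀ v ∈ W, MArgmin φ Γ xbar γ v = {m v}) ∧
      ∀ v₁ ∈ W, ∀ v₂ ∈ W, ‖m v₁ - m v₂‖ ≤ κ * ‖v₁ - v₂‖

/-- Tilt-stable local minimizer. -/
def TiltStable (φ : EuclideanSpace ℝ (Fin n) → ℝ) (Γ : Set (EuclideanSpace ℝ (Fin n)))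
    (xbar : EuclideanSpace ℝ (Fin n)) : Prop :=
  ∃ κ > (0:ℝ), TiltStableWith φ Γ xbar κ

/-- The exact bound of tilt stability. -/
def TiltBound (φ : EuclideanSpace ℝ (Fin n) → ℝ) (Γ : Set (EuclideanSpace ℝ (Fin n)))
    (xbar : EuclideanSpace ℝ (Fin n)) : ℝ :=
  sInf {κ : ℝ | 0 < κ ∧ TiltStableWith φ Γ xbar κ}

/-!
Parametrise a neighbourhood of `x` by `(t, y) ↦ x + t • v + ∑ k, y k • ∇q_k(x)`. In the
`y`-directions the derivative of the constraint map `(q_j)_j` is the Gram matrix of the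
gradients, invertible by linear independence, so the implicit function theorem yields `y(t)`
with `y(0) = 0` along which the constraints keep their value at `x`. Since `v` is orthogonal to
every gradient, the `t`-derivative of the constraints vanishes, hence `y'(0) = 0` and the curve
`t ↦ x + t • v + ∑ k, y(t) k • ∇q_k(x)` has velocity `v` at `0`.
-/

theorem ContinuousLinearMap.isInvertible_of_injective {𝕜 V : Type*} [NontriviallyNormedField 𝕜]
    [CompleteSpace 𝕜] [NormedAddCommGroup V] [NormedSpace 𝕜 V] [FiniteDimensional 𝕜 V]
    {f : V →L[𝕜] V} (hf : Function.Injective f) : f.IsInvertible :=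
  ⟨(LinearEquiv.ofInjectiveEndo (f : V →ₗ[𝕜] V) hf).toContinuousLinearEquiv, rfl⟩

section LevelCurve

variable {𝕜 : Type*} [RCLike 𝕜] {E F H : Type*}
  [NormedAddCommGroup E] [NormedSpace 𝕜 E] [CompleteSpace E]
  [NormedAddCommGroup F] [NormedSpace 𝕜 F] [CompleteSpace F]
  [NormedAddCommGroup H] [NormedSpace 𝕜 H]

theorem ContDiffAt.exists_curve_eventually_eq_of_isInvertible {g : H → F} {x v : H}
    {L : E →L[𝕜] H} {m : WithTop ℕ∞} (hg : ContDiffAt 𝕜 m g x) (hm : m ≠ 0)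
    (hv : fderiv 𝕜 g x v = 0) (hL : (fderiv 𝕜 g x ∘L L).IsInvertible) :
    ∃ c : 𝕜 → H, c 0 = x ∧ HasDerivAt c v 0 ∧ ContDiffAt 𝕜 m c 0 ∧
      ∀ᶠ t in 𝓝 0, g (c t) = g x := by
  obtain ⟨A, hA⟩ : ∃ A : 𝕜 × E →L[𝕜] H, ∀ p, A p = p.1 • v + L p.2 :=
    ⟨(ContinuousLinearMap.fst 𝕜 𝕜 E).smulRight v + L ∘L .snd 𝕜 𝕜 E, fun _ => rfl⟩
  have hg0 : ContDiffAt 𝕜 m g (x + A 0) := by rwa [map_zero, add_zero]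
  have hf : ContDiffAt 𝕜 m (fun p => g (x + A p)) 0 :=
    hg0.comp (f := fun p => x + A p) 0 (contDiff_const.add A.contDiff).contDiffAt
  have hf' : fderiv 𝕜 (fun p => g (x + A p)) 0 = fderiv 𝕜 g x ∘L A := by
    have := ((hg0.differentiableAt hm).hasFDerivAt.comp (f := fun p => x + A p) 0
      (A.hasFDerivAt.const_add x)).fderiv
    rwa [map_zero, add_zero] at this
  have hinr : fderiv 𝕜 (fun p => g (x + A p)) 0 ∘L .inr 𝕜 𝕜 E = fderiv 𝕜 g x ∘L L := by
    ext y; rw [hf']; simp [hA]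
  have hinl : fderiv 𝕜 (fun p => g (x + A p)) 0 ∘L .inl 𝕜 𝕜 E = 0 := by
    ext; rw [hf']; simp [hA, hv]
  rw [← hinr] at hL
  set φ := hf.implicitFunction hm hL
  have hφ0 : φ 0 = 0 := by simpa using hf.implicitFunction_apply_self hm hL
  have hφ' : HasDerivAt φ 0 0 := by
    simpa [hinl] using (hf.hasStrictFDerivAt_implicitFunction hm hL).hasFDerivAt.hasDerivAt
  have hφ : ContDiffAt 𝕜 m φ 0 := by simpa using hf.contDiffAt_implicitFunction hm hL
  refine ⟨fun t => x + A (t, φ t), by simp [hφ0, hA], ?_, ?_, ?_⟩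
  · simpa [hA] using
      (A.hasFDerivAt.comp_hasDerivAt _ ((hasDerivAt_id (0 : 𝕜)).prodMk hφ')).const_add x
  · exact contDiffAt_const.add (A.contDiff.contDiffAt.comp 0 (contDiffAt_id.prodMk hφ))
  · simpa [hφ0] using hf.eventually_apply_implicitFunction hm hL

end LevelCurve

section Gradient

variable {H : Type*} [NormedAddCommGroup H] [InnerProductSpace ℝ H] [CompleteSpace H]
  {κ : Type*}

theorem fderiv_pi_apply_eq_inner_gradient {q : κ → H → ℝ} {x : H}
    (hq : ∀ j, DifferentiableAt ℝ (q j) x) (h : H) :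
    fderiv ℝ (fun y j => q j y) x h = fun j => ⟪gradient (q j) x, h⟫ := by
  rw [(hasFDerivAt_pi.2 fun j => (hq j).hasGradientAt.hasFDerivAt).fderiv]
  ext j
  simp

theorem exists_curve_of_linearIndependent_gradient [Fintype κ] {q : κ → H → ℝ} {x v : H}
    {m : WithTop ℕ∞} (hq : ∀ j, ContDiffAt ℝ m (q j) x) (hm : m ≠ 0)
    (horth : ∀ j, ⟪gradient (q j) x, v⟫ = 0)
    (hli : LinearIndependent ℝ fun j => gradient (q j) x) :
    ∃ c : ℝ → H, c 0 = x ∧ HasDerivAt c v 0 ∧ ContDiffAt ℝ m c 0 ∧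
      ∀ᶠ t in 𝓝 0, ∀ j, q j (c t) = q j x := by
  classical
  set w := fun j => gradient (q j) x
  obtain ⟨L, hL⟩ : ∃ L : (κ → ℝ) →L[ℝ] H, ∀ y, L y = ∑ k, y k • w k :=
    ⟨∑ k, (ContinuousLinearMap.proj k).smulRight (w k), fun y => by simp⟩
  have hDq := fderiv_pi_apply_eq_inner_gradient fun j => (hq j).differentiableAt hm
  have hgram : ∀ y, (fderiv ℝ (fun y j => q j y) x ∘L L) y = (Matrix.gram ℝ w).mulVec y := by
    intro y
    ext j
    simp only [ContinuousLinearMap.comp_apply, hL, hDq, inner_sum, real_inner_smul_right,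
      Matrix.mulVec, dotProduct, Matrix.gram_apply, mul_comm, w]
  have hinv : (fderiv ℝ (fun y j => q j y) x ∘L L).IsInvertible := by
    refine ContinuousLinearMap.isInvertible_of_injective fun y z hyz => ?_
    rw [hgram, hgram] at hyz
    exact Matrix.mulVec_injective_iff_isUnit.2
      (Matrix.posDef_gram_of_linearIndependent hli).isUnit hyz
  obtain ⟨c, hc0, hcv, hcm, hcq⟩ := (contDiffAt_pi.2 hq).exists_curve_eventually_eq_of_isInvertible
    hm (by rw [hDq]; exact funext horth) hinv
  exact ⟨c, hc0, hcv, hcm, hcq.mono fun t ht => congrFun ht⟩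

end Gradient

theorem curve_construction_general
    {n : ℕ} {ι : Type*} (B : Finset ι)
    (q : ι → EuclideanSpace ℝ (Fin n) → ℝ) (hq : ∀ j ∈ B, ContDiff ℝ 2 (q j))
    (x v : EuclideanSpace ℝ (Fin n))
    (hq0 : ∀ j ∈ B, q j x = 0)
    (horth : ∀ j ∈ B, ⟪gradient (q j) x, v⟫ = 0)
    (hli : LinearIndependent ℝ (fun j : B => gradient (q j) x)) :
    ∃ tb > (0:ℝ), ∃ c : ℝ → EuclideanSpace ℝ (Fin n),
      ContDiffOn ℝ 1 c (Set.Ioo (-tb) tb) ∧ c 0 = x ∧ HasDerivAt c v 0 ∧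
      ∀ t ∈ Set.Ioo (-tb) tb, ∀ j ∈ B, q j (c t) = 0 := by
  obtain ⟨c, hc0, hcv, hc, hcq⟩ := exists_curve_of_linearIndependent_gradient
    (q := fun j : B => q j) (fun j => (hq j j.2).contDiffAt) two_ne_zero
    (fun j => horth j j.2) hli
  obtain ⟨ε, hε, hball⟩ := Metric.eventually_nhds_iff_ball.1 ((hc.eventually (by simp)).and hcq)
  rw [Real.ball_zero_eq_Ioo] at hball
  refine ⟨ε, hε, c, fun t ht => ((hball t ht).1.of_le one_le_two).contDiffWithinAt, hc0, hcv,
    fun t ht j hj => ?_⟩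
  simpa [hq0 j hj] using (hball t ht).2 ⟨j, hj⟩

/-- **Curve construction from the proof of Theorem 3.1.** If `q_j(x) = 0` and
`⟨∇q_j(x), v⟩ = 0` for all `j ∈ B`, with `{∇q_j(x) : j ∈ B}` linearly independent, then
there is a `C¹` curve `x̃ : (−t̄, t̄) → ℝⁿ` with `x̃(0) = x`, `x̃′(0) = v` and
`q_j(x̃(t)) = 0` for all `t` and all `j ∈ B`. -/
theorem curve_construction
    {n : ℕ} {ι : Type*} (B : Finset ι) (hB : B.Nonempty)
    (q : ι → EuclideanSpace ℝ (Fin n) → ℝ) (hq : ∀ j ∈ B, ContDiff ℝ 2 (q j))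
    (x v : EuclideanSpace ℝ (Fin n))
    (hq0 : ∀ j ∈ B, q j x = 0)
    (horth : ∀ j ∈ B, ⟪gradient (q j) x, v⟫ = 0)
    (hli : LinearIndependent ℝ (fun j : B => gradient (q j) x)) :
    ∃ tb > (0:ℝ), ∃ c : ℝ → EuclideanSpace ℝ (Fin n),
      ContDiffOn ℝ 1 c (Set.Ioo (-tb) tb) ∧ c 0 = x ∧ HasDerivAt c v 0 ∧
      ∀ t ∈ Set.Ioo (-tb) tb, ∀ j ∈ B, q j (c t) = 0 :=
  curve_construction_general B q hq x v hq0 horth hli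

end
end

section
/- (Theorem 4.1(i), second assertion) Let x̄ ∈ Γ be a stationary point of the NLP at which RCRCQ holds, and let κ > 0. Then the following are equivalent: (a) ⟨w, ∇²_x L(x̄, λ) w⟩ ≥ (1/κ)‖w‖² for every λ ∈ Λ(x̄) and every w ∈ ℝⁿ with ⟨∇q_i(x̄), w⟩ = 0 for all i ∈ E ∪ I⁺; (b) there exists λ ∈ Λ(x̄) such that ⟨w, ∇²_x L(x̄, λ) w⟩ ≥ (1/κ)‖w‖² for every w ∈ ℝⁿ with ⟨∇q_i(x̄), w⟩ = 0 for all i ∈ E ∪ I⁺. -/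
open Filter Topology Metric Set
open scoped RealInnerProductSpace

noncomputable section

variable {n : ℕ} {ι : Type*} [Fintype ι] [DecidableEq ι]

/-! Two multipliers `λ, μ ∈ Λ(x̄)` differ by `c = μ - λ`, which is supported on
`S = E ∪ (I(x̄) ∩ I⁺)` and satisfies `∑ cᵢ ∇qᵢ(x̄) = 0`; the two quadratic forms therefore differ
by `⟪w, ∑ cᵢ ∇²qᵢ(x̄) w⟫`, and this vanishes for `w ⊥ ∇qᵢ(x̄)`, `i ∈ S`. Indeed, by RCRCQ the
gradients `∇q_k(x)` of a subfamily `k ∈ B` that is a basis at `x̄` still span all `∇qᵢ(x)`,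
`i ∈ S`, near `x̄`. Hence `y(x) = ∑ cᵢ ∇qᵢ(x) = ∑ₖ dₖ(x) ∇q_k(x)` with Gram-matrix coefficients
`d` that are continuous and vanish at `x̄`, so `⟪w, y(x)⟫ = ∑ₖ dₖ(x) ⟪w, ∇q_k(x)⟫ = o(‖x - x̄‖)`,
and its derivative `⟪w, ∑ cᵢ ∇²qᵢ(x̄) ·⟫` at `x̄` is zero. -/

open scoped Matrix

section Gradient

variable {F : Type*} [NormedAddCommGroup F] [InnerProductSpace ℝ F] [CompleteSpace F]

theorem ContDiff.differentiable_gradient {f : F → ℝ} (hf : ContDiff ℝ 2 f) :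
    Differentiable ℝ (gradient f) :=
  (InnerProductSpace.toDual ℝ F).symm.toContinuousLinearEquiv.differentiable.comp
    ((hf.fderiv_right (m := 1) (by norm_num)).differentiable one_ne_zero)

theorem gradient_add_sum_mul {σ : Type*} [Fintype σ] {f : F → ℝ} {g : σ → F → ℝ}
    (hf : Differentiable ℝ f) (hg : ∀ i, Differentiable ℝ (g i)) (a : σ → ℝ) :
    gradient (fun y => f y + ∑ i, a i * g i y) =
      fun x => gradient f x + ∑ i, a i • gradient (g i) x := by
  ext1 x
  have hL := (hf x).hasFDerivAt.fun_add
    (HasFDerivAt.fun_sum (u := Finset.univ) fun i _ => ((hg i x).hasFDerivAt.const_mul (a i)))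
  rw [gradient, hL.fderiv]
  simp [gradient]

end Gradient

theorem hessApp_lagrangian {σ : Type*} [Fintype σ] {φ : EuclideanSpace ℝ (Fin n) → ℝ}
    {q : σ → EuclideanSpace ℝ (Fin n) → ℝ} (hφ : ContDiff ℝ 2 φ) (hq : ∀ i, ContDiff ℝ 2 (q i))
    (lam : EuclideanSpace ℝ σ) (x w : EuclideanSpace ℝ (Fin n)) :
    HessApp (fun y => φ y + ∑ i, lam i * q i y) x w = HessApp φ x w + HessComb q lam x w := by
  have hgrad := gradient_add_sum_mul (hφ.differentiable two_ne_zero)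
    (fun i => (hq i).differentiable two_ne_zero) (fun i => lam i)
  have hD := (hφ.differentiable_gradient x).hasFDerivAt.fun_add
    (HasFDerivAt.fun_sum (u := Finset.univ) fun i _ =>
      ((hq i).differentiable_gradient x).hasFDerivAt.fun_const_smul (lam i))
  simp only [HessApp, HessComb, hgrad]
  rw [hD.fderiv]
  simp

theorem hasFDerivAt_mul_of_tendsto_zero {𝕜 E : Type*} [NontriviallyNormedField 𝕜]
    [NormedAddCommGroup E] [NormedSpace 𝕜 E] {f g : E → 𝕜} {x : E}
    (hf : Tendsto f (𝓝 x) (𝓝 0)) (hg : DifferentiableAt 𝕜 g x) (hgx : g x = 0) :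
    HasFDerivAt (fun y => f y * g y) (0 : E →L[𝕜] 𝕜) x := by
  have hfo : f =o[𝓝 x] (fun _ => (1 : ℝ)) := (Asymptotics.isLittleO_one_iff ℝ).mpr hf
  have hgO : g =O[𝓝 x] fun y => ‖y - x‖ := by
    simpa [hgx] using hg.hasFDerivAt.isBigO_sub.norm_right
  refine HasFDerivAt.of_isLittleO ?_
  simpa [hgx] using (hfo.mul_isBigO hgO).norm_right

section ConstantRank

variable {H : Type*} [NormedAddCommGroup H] [InnerProductSpace ℝ H]

theorem Matrix.gram_mulVec_apply {m : Type*} [Fintype m] (u : m → H) (a : m → ℝ) (j : m) :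
    (Matrix.gram ℝ u *ᵥ a) j = ⟪u j, ∑ k, a k • u k⟫ := by
  simp [Matrix.mulVec, dotProduct, Matrix.gram_apply, inner_sum, real_inner_smul_right, mul_comm]

theorem Matrix.sum_gram_inv_mulVec_inner_smul {m : Type*} [Fintype m] [DecidableEq m]
    {u : m → H} {y : H} (hdet : (Matrix.gram ℝ u).det ≠ 0)
    (hy : y ∈ Submodule.span ℝ (Set.range u)) :
    ∑ k, ((Matrix.gram ℝ u)⁻¹ *ᵥ fun j => ⟪u j, y⟫) k • u k = y := by
  obtain ⟨a, rfl⟩ := (Submodule.mem_span_range_iff_exists_fun ℝ).mp hy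
  have hinner : (fun j => ⟪u j, ∑ k, a k • u k⟫) = Matrix.gram ℝ u *ᵥ a :=
    funext fun j => (Matrix.gram_mulVec_apply u a j).symm
  rw [hinner, Matrix.mulVec_mulVec,
    Matrix.nonsing_inv_mul _ (isUnit_iff_ne_zero.mpr hdet), Matrix.one_mulVec]

theorem hasFDerivAt_inner_eq_zero_of_eventually_mem_span {m : Type*} [Fintype m] [DecidableEq m]
    {u : m → H → H} {y : H → H} {x w : H} (hu : ∀ k, DifferentiableAt ℝ (u k) x)
    (hind : LinearIndependent ℝ fun k => u k x) (hy : ContinuousAt y x) (hyx : y x = 0)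
    (hspan : ∀ᶠ z in 𝓝 x, y z ∈ Submodule.span ℝ (Set.range fun k => u k z))
    (hw : ∀ k, ⟪u k x, w⟫ = 0) :
    HasFDerivAt (fun z => ⟪w, y z⟫) (0 : H →L[ℝ] ℝ) x := by
  set G : H → Matrix m m ℝ := fun z => Matrix.gram ℝ fun k => u k z
  set d : H → m → ℝ := fun z => (G z)⁻¹ *ᵥ fun j => ⟪u j z, y z⟫
  have hG : ContinuousAt G x := continuousAt_pi.2 fun j => continuousAt_pi.2 fun k =>
    (hu j).continuousAt.inner (hu k).continuousAt
  have hdet : (G x).det ≠ 0 := Matrix.det_gram_ne_zero_iff_linearIndependent.mpr hind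
  have hd : Tendsto d (𝓝 x) (𝓝 0) := by
    have hinv : ContinuousAt (fun z => (G z)⁻¹) x :=
      (continuousAt_matrix_inv _ (by simpa using continuousAt_inv₀ hdet)).comp hG
    have hb : ContinuousAt (fun z j => ⟪u j z, y z⟫) x :=
      continuousAt_pi.2 fun j => (hu j).continuousAt.inner hy
    have hdx : d x = 0 := by
      simp only [d, hyx, inner_zero_right]
      exact Matrix.mulVec_zero _
    rw [← hdx]
    exact ((continuous_fst.matrix_mulVec continuous_snd).continuousAt.comp (hinv.prodMk hb)).tendsto
  have hsum : (fun z => ⟪w, y z⟫) =ᶠ[𝓝 x] fun z => ∑ k, d z k * ⟪w, u k z⟫ := by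
    filter_upwards [((continuous_id.matrix_det).continuousAt.comp hG).eventually_ne hdet, hspan]
      with z hz hyz
    rw [← Matrix.sum_gram_inv_mulVec_inner_smul hz hyz]
    simp [d, G, inner_sum, real_inner_smul_right]
  refine HasFDerivAt.congr_of_eventuallyEq ?_ hsum
  simpa using HasFDerivAt.fun_sum (u := Finset.univ) fun k _ =>
    hasFDerivAt_mul_of_tendsto_zero (((continuous_apply k).tendsto _).comp hd)
      ((differentiableAt_const w).inner ℝ (hu k)) (by rw [real_inner_comm]; exact hw k)

theorem exists_linearIndepOn_eventually_mem_span {σ : Type*} {v : σ → H → H} {S : Finset σ}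
    {x : H} (hv : ∀ i ∈ S, ContinuousAt (v i) x)
    (hrank : ∀ᶠ z in 𝓝 x, Module.finrank ℝ (Submodule.span ℝ ((fun i => v i z) '' S)) ≤
      Module.finrank ℝ (Submodule.span ℝ ((fun i => v i x) '' S))) :
    ∃ B ⊆ (S : Set σ), LinearIndepOn ℝ (fun i => v i x) B ∧
      ∀ᶠ z in 𝓝 x, ∀ i ∈ S, v i z ∈ Submodule.span ℝ (Set.range fun k : B => v k z) := by
  obtain ⟨B, hBS, -, hSB, hB⟩ :=
    exists_linearIndepOn_extension (linearIndepOn_empty ℝ fun i => v i x) (empty_subset _)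
  have : Fintype B := (S.finite_toSet.subset hBS).fintype
  have hrange_le : ∀ z, Submodule.span ℝ (Set.range fun k : B => v k z) ≤
      Submodule.span ℝ ((fun i => v i z) '' S) := fun z =>
    Submodule.span_mono <| by rintro _ ⟨k, rfl⟩; exact ⟨k, hBS k.2, rfl⟩
  have hcard : Module.finrank ℝ (Submodule.span ℝ ((fun i => v i x) '' S)) = Fintype.card B := by
    rw [← finrank_span_eq_card hB, le_antisymm (Submodule.span_le.mpr _) (hrange_le x)]
    simpa only [Set.image_eq_range (fun i => v i x) B] using hSB
  have hcont : ContinuousAt (fun z (k : B) => v k z) x :=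
    continuousAt_pi.2 fun k => hv k (hBS k.2)
  refine ⟨B, hBS, hB, ?_⟩
  filter_upwards [hcont.tendsto.eventually hB.eventually, hrank] with z hindz hrankz i hi
  have := FiniteDimensional.span_of_finite ℝ (S.finite_toSet.image fun i => v i z)
  rw [Submodule.eq_of_le_of_finrank_le (hrange_le z)
    (by rw [finrank_span_eq_card hindz, ← hcard]; exact hrankz)]
  exact Submodule.subset_span ⟨i, hi, rfl⟩

theorem inner_sum_smul_fderiv_eq_zero_of_finrank_le {σ : Type*} [Fintype σ] {v : σ → H → H}
    {S : Finset σ} {x : H} (hv : ∀ i, DifferentiableAt ℝ (v i) x)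
    (hrank : ∀ᶠ z in 𝓝 x, Module.finrank ℝ (Submodule.span ℝ ((fun i => v i z) '' S)) ≤
      Module.finrank ℝ (Submodule.span ℝ ((fun i => v i x) '' S)))
    {c : σ → ℝ} (hcS : ∀ i ∉ S, c i = 0) (hc : ∑ i, c i • v i x = 0)
    {w : H} (hw : ∀ i ∈ S, ⟪v i x, w⟫ = 0) (u : H) :
    ⟪w, ∑ i, c i • fderiv ℝ (v i) x u⟫ = 0 := by
  classical
  obtain ⟨B, hBS, hB, hspan⟩ :=
    exists_linearIndepOn_eventually_mem_span (fun i _ => (hv i).continuousAt) hrank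
  have : Fintype B := (S.finite_toSet.subset hBS).fintype
  have hy : HasFDerivAt (fun z => ∑ i, c i • v i z) (∑ i, c i • fderiv ℝ (v i) x) x :=
    HasFDerivAt.fun_sum fun i _ => (hv i).hasFDerivAt.const_smul (c i)
  have hzero := hasFDerivAt_inner_eq_zero_of_eventually_mem_span (fun k : B => hv k) hB
    hy.continuousAt hc ?_ fun k => hw k (hBS k.2)
  · simpa [inner_sum, real_inner_smul_right] using
      congrArg (· u) (((innerSL ℝ w).hasFDerivAt.comp x hy).unique hzero)
  filter_upwards [hspan] with z hz
  refine Submodule.sum_mem _ fun i _ => ?_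
  by_cases hi : i ∈ S
  · exact Submodule.smul_mem _ _ (hz i hi)
  · simp [hcS i hi]

end ConstantRank

theorem mem_activeI_and_mem_iplusSet_of_mem_mult {σ : Type*} [Fintype σ] {I : Finset σ}
    {q : σ → EuclideanSpace ℝ (Fin n) → ℝ} {x xs : EuclideanSpace ℝ (Fin n)}
    {lam : EuclideanSpace ℝ σ} (hlam : lam ∈ Mult I q x xs) {i : σ} (hi : i ∈ I)
    (hne : lam i ≠ 0) :
    i ∈ ActiveI I q x ∧ i ∈ IplusSet I q x xs := by
  obtain ⟨hnonneg, hcompl⟩ := hlam.2 i hi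
  refine ⟨Finset.mem_filter.mpr ⟨hi, (mul_eq_zero.mp hcompl).resolve_left hne⟩, lam, hlam, ?_⟩
  exact Finset.mem_filter.mpr ⟨hi, lt_of_le_of_ne hnonneg (Ne.symm hne)⟩

theorem quadComb_eq_of_mem_mult {E I : Finset ι} (hunion : E ∪ I = Finset.univ)
    {q : ι → EuclideanSpace ℝ (Fin n) → ℝ} (hq : ∀ i, ContDiff ℝ 2 (q i))
    {x xs : EuclideanSpace ℝ (Fin n)} (hrcrcq : RCRCQat E I q x)
    {lam mu : EuclideanSpace ℝ ι} (hlam : lam ∈ Mult I q x xs) (hmu : mu ∈ Mult I q x xs)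
    {w : EuclideanSpace ℝ (Fin n)}
    (hw : ∀ i, (i ∈ E ∨ i ∈ IplusSet I q x xs) → ⟪gradient (q i) x, w⟫ = 0) :
    QuadComb q mu x w = QuadComb q lam x w := by
  classical
  set J := (ActiveI I q x).filter (· ∈ IplusSet I q x xs)
  have hsupp : ∀ nu ∈ Mult I q x xs, ∀ i ∉ E ∪ J, nu i = 0 := by
    intro nu hnu i hiS
    by_contra hne
    have hiE : i ∉ E := fun h => hiS (Finset.mem_union_left _ h)
    have hiI : i ∈ I := (Finset.mem_union.mp (hunion ▸ Finset.mem_univ i)).resolve_left hiE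
    obtain ⟨hact, hplus⟩ := mem_activeI_and_mem_iplusSet_of_mem_mult hnu hiI hne
    exact hiS (Finset.mem_union_right _ (Finset.mem_filter.mpr ⟨hact, hplus⟩))
  obtain ⟨U, hU, hconst⟩ := hrcrcq
  have hkey := inner_sum_smul_fderiv_eq_zero_of_finrank_le (S := E ∪ J)
    (fun i => (hq i).differentiable_gradient x)
    (by
      filter_upwards [hU] with z hz
      exact (hconst J (Finset.filter_subset _ _) z hz x (mem_of_mem_nhds hU)).le)
    (c := fun i => mu i - lam i)
    (fun i hi => by rw [hsupp mu hmu i hi, hsupp lam hlam i hi, sub_zero])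
    (by simp [sub_smul, Finset.sum_sub_distrib, hmu.1, hlam.1])
    (fun i hi => hw i <| (Finset.mem_union.mp hi).imp id fun hiJ => (Finset.mem_filter.mp hiJ).2) w
  rw [← sub_eq_zero, QuadComb, QuadComb, ← inner_sub_right, HessComb, HessComb,
    ← Finset.sum_sub_distrib]
  simpa [HessApp, sub_smul] using hkey

theorem tilt_stable_char_single_multiplier_general
    {n : ℕ} {ι : Type*} [Fintype ι] [DecidableEq ι]
    (E I : Finset ι) (hunion : E ∪ I = Finset.univ)
    (q : ι → EuclideanSpace ℝ (Fin n) → ℝ) (hq : ∀ i, ContDiff ℝ 2 (q i))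
    (φ : EuclideanSpace ℝ (Fin n) → ℝ) (hφ : ContDiff ℝ 2 φ)
    (xbar : EuclideanSpace ℝ (Fin n))
    (hstat : (Mult I q xbar (-gradient φ xbar)).Nonempty)
    (hrcrcq : RCRCQat E I q xbar)
    (κ : ℝ) :
    (∀ lam ∈ Mult I q xbar (-gradient φ xbar),
      ∀ w : EuclideanSpace ℝ (Fin n),
        (∀ i, (i ∈ E ∨ i ∈ IplusSet I q xbar (-gradient φ xbar)) →
          ⟪gradient (q i) xbar, w⟫ = 0) →
        (1 / κ) * ‖w‖ ^ 2 ≤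
          ⟪w, HessApp (fun y => φ y + ∑ i, lam i * q i y) xbar w⟫) ↔
    (∃ lam ∈ Mult I q xbar (-gradient φ xbar),
      ∀ w : EuclideanSpace ℝ (Fin n),
        (∀ i, (i ∈ E ∨ i ∈ IplusSet I q xbar (-gradient φ xbar)) →
          ⟪gradient (q i) xbar, w⟫ = 0) →
        (1 / κ) * ‖w‖ ^ 2 ≤
          ⟪w, HessApp (fun y => φ y + ∑ i, lam i * q i y) xbar w⟫) := by
  constructor
  · obtain ⟨lam, hlam⟩ := hstat
    exact fun hall => ⟨lam, hlam, hall lam hlam⟩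
  · rintro ⟨lam, hlam, hbound⟩ mu hmu w hw
    have hsame : ⟪w, HessApp (fun y => φ y + ∑ i, mu i * q i y) xbar w⟫ =
        ⟪w, HessApp (fun y => φ y + ∑ i, lam i * q i y) xbar w⟫ := by
      rw [hessApp_lagrangian hφ hq, hessApp_lagrangian hφ hq, inner_add_right, inner_add_right]
      exact congrArg _ (quadComb_eq_of_mem_mult hunion hq hrcrcq hlam hmu hw)
    exact hsame ▸ hbound w hw

/-- **Theorem 4.1(i), second assertion.** At a stationary point `x̄ ∈ Γ` satisfying RCRCQ, the
uniform positive-definiteness condition over all multipliers `λ ∈ Λ(x̄)` is equivalent to the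
same condition for a single multiplier `λ ∈ Λ(x̄)`. -/
theorem tilt_stable_char_single_multiplier
    {n : ℕ} {ι : Type*} [Fintype ι] [DecidableEq ι] [Nonempty ι]
    (E I : Finset ι) (hdisj : Disjoint E I) (hunion : E ∪ I = Finset.univ)
    (q : ι → EuclideanSpace ℝ (Fin n) → ℝ) (hq : ∀ i, ContDiff ℝ 2 (q i))
    (φ : EuclideanSpace ℝ (Fin n) → ℝ) (hφ : ContDiff ℝ 2 φ)
    (xbar : EuclideanSpace ℝ (Fin n)) (hfeas : xbar ∈ Feas E I q)
    (hstat : (Mult I q xbar (-gradient φ xbar)).Nonempty)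
    (hrcrcq : RCRCQat E I q xbar)
    (κ : ℝ) (hκ : 0 < κ) :
    (∀ lam ∈ Mult I q xbar (-gradient φ xbar),
      ∀ w : EuclideanSpace ℝ (Fin n),
        (∀ i, (i ∈ E ∨ i ∈ IplusSet I q xbar (-gradient φ xbar)) →
          ⟪gradient (q i) xbar, w⟫ = 0) →
        (1 / κ) * ‖w‖ ^ 2 ≤
          ⟪w, HessApp (fun y => φ y + ∑ i, lam i * q i y) xbar w⟫) ↔
    (∃ lam ∈ Mult I q xbar (-gradient φ xbar),
      ∀ w : EuclideanSpace ℝ (Fin n),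
        (∀ i, (i ∈ E ∨ i ∈ IplusSet I q xbar (-gradient φ xbar)) →
          ⟪gradient (q i) xbar, w⟫ = 0) →
        (1 / κ) * ‖w‖ ^ 2 ≤
          ⟪w, HessApp (fun y => φ y + ∑ i, lam i * q i y) xbar w⟫) :=
  tilt_stable_char_single_multiplier_general E I hunion q hq φ hφ xbar hstat hrcrcq κ

end
end

section
/- (Lemma 2.3) Let f_0, f_1, …, f_q : ℝⁿ → ℝ be continuously differentiable on a neighborhood of x̄ ∈ ℝⁿ, with {∇f_1(x̄), …, ∇f_q(x̄)} linearly independent, and suppose ∇f_0(x) ∈ span{∇f_1(x), …, ∇f_q(x)} for all x in some neighborhood of x̄. Then there exist open convex neighborhoods X of x̄ in ℝⁿ and Y of (f_1(x̄), …, f_q(x̄)) in ℝ^q, and a continuously differentiable function g_0 : Y → ℝ, such that (f_1(x), …, f_q(x)) ∈ Y and f_0(x) = g_0(f_1(x), …, f_q(x)) for every x ∈ X; moreover, ∇f_0(x̄) = Σ_{i=1}^q λ_i ∇f_i(x̄), where λ_i := (∂g_0/∂y_i)(f_1(x̄), …, f_q(x̄)) for i = 1, …, q. -/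
open Filter Topology Metric Set
open scoped RealInnerProductSpace

noncomputable section

variable {n : ℕ} {ι : Type*} [Fintype ι] [DecidableEq ι]

/-!
Since the derivative of `F = (f₁, …, f_m)` is onto at `x̄`, the implicit function theorem gives
a `C¹` local parametrisation `ψ (y, z)` of a neighbourhood of `x̄`, with `z` ranging over
`ker DF(x̄)` and `F (ψ (y, z)) = y`. Differentiating `F ∘ ψ = Prod.fst` shows that `∂ψ/∂z` takes
values in `ker DF`, on which `Df₀` vanishes by the span hypothesis. Hence `f₀ ∘ ψ` does not depend
on `z` on a product of balls, and `g₀ y := f₀ (ψ (y, 0))` works. The multiplier formula is the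
chain rule for `f₀ = g₀ ∘ F`.
-/

section FunctionalDependence

variable {E : Type*} [NormedAddCommGroup E] [NormedSpace ℝ E]
  {G : Type*} [NormedAddCommGroup G] [NormedSpace ℝ G]
  {H : Type*} [NormedAddCommGroup H] [NormedSpace ℝ H]

theorem HasStrictFDerivAt.contDiffAt_uncurry_implicitFunction [CompleteSpace E]
    [FiniteDimensional ℝ G] {F : E → G} {F' : E →L[ℝ] G} {a : E} {k : WithTop ℕ∞}
    (hF : ContDiffAt ℝ k F a) (hk : k ≠ 0) (hF' : HasStrictFDerivAt F F' a)
    (hsurj : F'.range = ⊤) :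
    ContDiffAt ℝ k (Function.uncurry (hF'.implicitFunction F F' hsurj)) (F a, 0) := by
  have := FiniteDimensional.complete ℝ G
  set φ := hF'.implicitFunctionDataOfComplemented F F' hsurj
    F'.ker_closedComplemented_of_finiteDimensional_range
  have hpt : φ.prodFun φ.pt = (F a, 0) := by simp [φ]
  have key := φ.contDiffAt_implicitFunction hF
    ((ContinuousLinearMap.contDiff _).comp (contDiff_id.sub contDiff_const)).contDiffAt hk
  rwa [hpt] at key

theorem hasFDerivAt_comp_prodMk_eq_zero_of_ker_fderiv_le {K : Type*} [NormedAddCommGroup K]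
    [NormedSpace ℝ K] {F : E → G} {f₀ : E → H} {ψ : G × K → E} {y : G} {z : K}
    (hψ : DifferentiableAt ℝ ψ (y, z)) (hF : DifferentiableAt ℝ F (ψ (y, z)))
    (hf₀ : DifferentiableAt ℝ f₀ (ψ (y, z))) (hFψ : F ∘ ψ =ᶠ[𝓝 (y, z)] Prod.fst)
    (hker : (fderiv ℝ F (ψ (y, z))).ker ≤ (fderiv ℝ f₀ (ψ (y, z))).ker) :
    HasFDerivAt (fun z' => f₀ (ψ (y, z'))) (0 : K →L[ℝ] H) z := by
  have hslice : HasFDerivAt (fun z' => ψ (y, z')) (fderiv ℝ ψ (y, z) ∘L .inr ℝ G K) z :=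
    hψ.hasFDerivAt.comp z (hasFDerivAt_prodMk_right y z)
  have hfst : fderiv ℝ F (ψ (y, z)) ∘L fderiv ℝ ψ (y, z) = .fst ℝ G K := by
    rw [← fderiv_comp _ hF hψ, hFψ.fderiv_eq, fderiv_fst]
  refine (hf₀.hasFDerivAt.comp z hslice).congr_fderiv (ContinuousLinearMap.ext fun w => ?_)
  apply hker
  simpa using congr($hfst (0, w))

theorem exists_contDiffOn_eq_comp_of_ker_fderiv_le [CompleteSpace E] [FiniteDimensional ℝ G]
    {F : E → G} {f₀ : E → H} {a : E} (hF : ContDiffAt ℝ 1 F a) (hf₀ : ContDiffAt ℝ 1 f₀ a)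
    (hsurj : (fderiv ℝ F a).range = ⊤)
    (hker : ∀ᶠ x in 𝓝 a, (fderiv ℝ F x).ker ≤ (fderiv ℝ f₀ x).ker) :
    ∃ r > 0, ∃ g₀ : G → H, ContDiffOn ℝ 1 g₀ (ball (F a) r) ∧
      ∀ᶠ x in 𝓝 a, F x ∈ ball (F a) r ∧ f₀ x = g₀ (F x) := by
  have hF' : HasStrictFDerivAt F (fderiv ℝ F a) a := hF.hasStrictFDerivAt one_ne_zero
  set K := (fderiv ℝ F a).ker
  set e := hF'.implicitToOpenPartialHomeomorph F _ hsurj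
  set ψ := Function.uncurry (hF'.implicitFunction F _ hsurj)
  have hψ : ContDiffAt ℝ 1 ψ (F a, 0) :=
    hF'.contDiffAt_uncurry_implicitFunction hF one_ne_zero hsurj
  have hψa : ψ (F a, 0) = a := hF'.implicitFunction_apply_image hsurj
  have hψt : Tendsto ψ (𝓝 (F a, 0)) (𝓝 a) := by
    simpa only [hψa] using hψ.continuousAt.tendsto
  have hh : ContDiffAt ℝ 1 (f₀ ∘ ψ) (F a, 0) := (hψa ▸ hf₀).comp _ hψ
  have hvert : ∀ᶠ p in 𝓝 (F a, 0), ContDiffAt ℝ 1 (f₀ ∘ ψ) p ∧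
      HasFDerivAt (fun z => f₀ (ψ (p.1, z))) (0 : K →L[ℝ] H) p.2 := by
    have hnear : ∀ᶠ x in 𝓝 a, ContDiffAt ℝ 1 F x ∧ ContDiffAt ℝ 1 f₀ x ∧
        (fderiv ℝ F x).ker ≤ (fderiv ℝ f₀ x).ker :=
      (hF.eventually (by simp)).and ((hf₀.eventually (by simp)).and hker)
    filter_upwards [hh.eventually (by simp), hψ.eventually (by simp), hψt.eventually hnear,
      (hF'.map_implicitFunction_eq hsurj).eventually_nhds]
      with ⟨y, z⟩ hhp hψp ⟨hFp, hf₀p, hkerp⟩ hFψ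
    exact ⟨hhp, hasFDerivAt_comp_prodMk_eq_zero_of_ker_fderiv_le
      (hψp.differentiableAt one_ne_zero) (hFp.differentiableAt one_ne_zero)
      (hf₀p.differentiableAt one_ne_zero) hFψ hkerp⟩
  obtain ⟨r, hr, hball⟩ := Metric.eventually_nhds_iff_ball.1 hvert
  rw [← ball_prod_same] at hball
  refine ⟨r, hr, fun y => f₀ (ψ (y, 0)), fun y hy => ?_, ?_⟩
  · exact ((hball (y, 0) ⟨hy, mem_ball_self hr⟩).1.comp y
      (contDiffAt_id.prodMk contDiffAt_const)).contDiffWithinAt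
  have he : Tendsto e (𝓝 a) (𝓝 (F a, 0)) := by
    simpa only [e, hF'.implicitToOpenPartialHomeomorph_self hsurj] using
      (e.continuousAt (hF'.mem_implicitToOpenPartialHomeomorph_source hsurj)).tendsto
  filter_upwards [hF'.eq_implicitFunction hsurj,
    he (prod_mem_nhds (ball_mem_nhds _ hr) (ball_mem_nhds _ hr))] with x hψx hex
  refine ⟨hex.1, ?_⟩
  have hconst : ∀ z ∈ ball (0 : K) r,
      HasFDerivAt (fun z => f₀ (ψ (F x, z))) (0 : K →L[ℝ] H) z := fun z hz =>
    (hball (F x, z) ⟨hex.1, hz⟩).2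
  calc f₀ x = f₀ (ψ (F x, (e x).2)) := (congrArg f₀ hψx).symm
    _ = f₀ (ψ (F x, 0)) := isOpen_ball.is_const_of_fderiv_eq_zero
        (convex_ball _ _).isPreconnected
        (fun z hz => (hconst z hz).differentiableAt.differentiableWithinAt)
        (fun z hz => (hconst z hz).fderiv) hex.2 (mem_ball_self hr)

end FunctionalDependence

section Gradients

variable {ι : Type*} [Fintype ι]

theorem fderiv_toLp_apply {E : Type*} [NormedAddCommGroup E] [NormedSpace ℝ E]
    {f : ι → E → ℝ} {x : E} (hf : ∀ i, DifferentiableAt ℝ (f i) x) (v : E) (i : ι) :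
    fderiv ℝ (fun x => WithLp.toLp 2 fun i => f i x) x v i = fderiv ℝ (f i) x v := by
  have hF : DifferentiableAt ℝ
      (fun x => WithLp.toLp 2 fun i => f i x : E → EuclideanSpace ℝ ι) x :=
    (differentiableAt_piLp 2).2 hf
  have hi := (PiLp.hasFDerivAt_apply 2 _ i).comp x hF.hasFDerivAt
  rw [HasFDerivAt.fderiv (f := f i) hi]
  rfl

variable {E : Type*} [NormedAddCommGroup E] [InnerProductSpace ℝ E] [CompleteSpace E]

theorem ker_fderiv_toLp_le_of_gradient_mem_span {f₀ : E → ℝ} {f : ι → E → ℝ} {x : E}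
    (hf : ∀ i, DifferentiableAt ℝ (f i) x)
    (hspan : gradient f₀ x ∈ Submodule.span ℝ (Set.range fun i => gradient (f i) x)) :
    (fderiv ℝ (fun x => WithLp.toLp 2 fun i => f i x : E → EuclideanSpace ℝ ι) x).ker ≤
      (fderiv ℝ f₀ x).ker := by
  intro v hv
  rw [LinearMap.mem_ker, ContinuousLinearMap.coe_coe] at hv
  have hperp : Submodule.span ℝ (Set.range fun i => gradient (f i) x) ≤ (ℝ ∙ v)ᗮ := by
    refine Submodule.span_le.2 (Set.range_subset_iff.2 fun i => ?_)
    rw [SetLike.mem_coe, Submodule.mem_orthogonal_singleton_iff_inner_right, real_inner_comm,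
      inner_gradient_left, ← fderiv_toLp_apply hf, hv]
    rfl
  have := Submodule.mem_orthogonal_singleton_iff_inner_right.1 (hperp hspan)
  rwa [real_inner_comm, inner_gradient_left] at this

theorem range_fderiv_toLp_eq_top_of_linearIndependent {f : ι → E → ℝ} {x : E}
    (hf : ∀ i, DifferentiableAt ℝ (f i) x) (hli : LinearIndependent ℝ fun i => gradient (f i) x) :
    (fderiv ℝ (fun x => WithLp.toLp 2 fun i => f i x : E → EuclideanSpace ℝ ι) x).range = ⊤ := by
  rw [← Submodule.orthogonal_eq_bot_iff, Submodule.eq_bot_iff]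
  intro c hc
  have hcomb : ∑ i, c i • gradient (f i) x = 0 := by
    refine ext_inner_right ℝ fun v => ?_
    have := Submodule.inner_right_of_mem_orthogonal (LinearMap.mem_range_self _ v) hc
    simpa [sum_inner, real_inner_smul_left, inner_gradient_left, ← fderiv_toLp_apply hf,
      PiLp.inner_apply, mul_comm] using this
  ext i
  exact Fintype.linearIndependent_iff.1 hli _ hcomb i

theorem gradient_eq_sum_of_fderiv_eq_comp [DecidableEq ι] {f₀ : E → ℝ} {f : ι → E → ℝ} {x : E}
    (hf : ∀ i, DifferentiableAt ℝ (f i) x) (L : EuclideanSpace ℝ ι →L[ℝ] ℝ)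
    (h : fderiv ℝ f₀ x =
      L ∘L fderiv ℝ (fun x => WithLp.toLp 2 fun i => f i x : E → EuclideanSpace ℝ ι) x) :
    gradient f₀ x = ∑ i, L (EuclideanSpace.single i 1) • gradient (f i) x := by
  refine ext_inner_right ℝ fun v => ?_
  rw [inner_gradient_left, h, ContinuousLinearMap.comp_apply, sum_inner]
  conv_lhs => rw [← (EuclideanSpace.basisFun ι ℝ).sum_repr (fderiv ℝ _ x v)]
  simp [real_inner_smul_left, inner_gradient_left, fderiv_toLp_apply hf, mul_comm]

end Gradients

/-- **Lemma 2.3.** If `∇f₀(x) ∈ span{∇f₁(x), …, ∇f_m(x)}` near `x̄` with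
`{∇f_i(x̄)}` linearly independent, then locally `f₀ = g₀(f₁, …, f_m)` for a `C¹` function
`g₀`, and `∇f₀(x̄) = Σ_i λ_i ∇f_i(x̄)` with `λ_i = (∂g₀/∂y_i)(f₁(x̄), …, f_m(x̄))`. -/
theorem lemma23
    {n m : ℕ} (f0 : EuclideanSpace ℝ (Fin n) → ℝ)
    (f : Fin m → EuclideanSpace ℝ (Fin n) → ℝ)
    (xbar : EuclideanSpace ℝ (Fin n))
    (hf0 : ∃ U ∈ 𝓝 xbar, ContDiffOn ℝ 1 f0 U)
    (hf : ∀ i, ∃ U ∈ 𝓝 xbar, ContDiffOn ℝ 1 (f i) U)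
    (hli : LinearIndependent ℝ (fun i => gradient (f i) xbar))
    (hspan : ∀ᶠ x in 𝓝 xbar,
      gradient f0 x ∈ Submodule.span ℝ (Set.range fun i => gradient (f i) x)) :
    ∃ X : Set (EuclideanSpace ℝ (Fin n)), ∃ Y : Set (EuclideanSpace ℝ (Fin m)),
      IsOpen X ∧ Convex ℝ X ∧ xbar ∈ X ∧ IsOpen Y ∧ Convex ℝ Y ∧
      (show EuclideanSpace ℝ (Fin m) from WithLp.toLp 2 (fun i => f i xbar)) ∈ Y ∧
      ∃ g0 : EuclideanSpace ℝ (Fin m) → ℝ, ContDiffOn ℝ 1 g0 Y ∧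
        (∀ x ∈ X, (show EuclideanSpace ℝ (Fin m) from WithLp.toLp 2 (fun i => f i x)) ∈ Y ∧
          f0 x = g0 (show EuclideanSpace ℝ (Fin m) from WithLp.toLp 2 (fun i => f i x))) ∧
        gradient f0 xbar =
          ∑ i, (fderiv ℝ g0 (show EuclideanSpace ℝ (Fin m) from WithLp.toLp 2 (fun i => f i xbar))
              (EuclideanSpace.single i 1)) • gradient (f i) xbar := by
  obtain ⟨U₀, hU₀, hf0U⟩ := hf0
  have hf0C : ContDiffAt ℝ 1 f0 xbar := hf0U.contDiffAt hU₀
  have hfC : ∀ i, ContDiffAt ℝ 1 (f i) xbar := fun i =>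
    let ⟨_, hU, hfU⟩ := hf i
    hfU.contDiffAt hU
  set F : EuclideanSpace ℝ (Fin n) → EuclideanSpace ℝ (Fin m) :=
    fun x => WithLp.toLp 2 fun i => f i x
  have hFC : ContDiffAt ℝ 1 F xbar := contDiffAt_piLp' 2 hfC
  have hdiff : ∀ᶠ x in 𝓝 xbar, ∀ i, DifferentiableAt ℝ (f i) x :=
    eventually_all.2 fun i =>
      ((hfC i).eventually (by simp)).mono fun _ hx => hx.differentiableAt one_ne_zero
  obtain ⟨r, hr, g0, hg0, hfac⟩ := exists_contDiffOn_eq_comp_of_ker_fderiv_le hFC hf0C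
    (range_fderiv_toLp_eq_top_of_linearIndependent hdiff.self_of_nhds hli)
    ((hdiff.and hspan).mono fun _ hx => ker_fderiv_toLp_le_of_gradient_mem_span hx.1 hx.2)
  obtain ⟨s, hs, hX⟩ := Metric.eventually_nhds_iff_ball.1 hfac
  refine ⟨ball xbar s, ball (F xbar) r, isOpen_ball, convex_ball _ _, mem_ball_self hs,
    isOpen_ball, convex_ball _ _, mem_ball_self hr, g0, hg0, hX, ?_⟩
  have hfac' : f0 =ᶠ[𝓝 xbar] g0 ∘ F := hfac.mono fun _ hx => hx.2
  have hchain : fderiv ℝ f0 xbar = fderiv ℝ g0 (F xbar) ∘L fderiv ℝ F xbar := by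
    rw [hfac'.fderiv_eq,
      fderiv_comp _ ((hg0.differentiableOn one_ne_zero).differentiableAt (ball_mem_nhds _ hr))
        (hFC.differentiableAt one_ne_zero)]
  exact gradient_eq_sum_of_fderiv_eq_comp hdiff.self_of_nhds _ hchain
end
end

section
/- (Lemma 2.1(i)) Let MSCQ hold at x̄ ∈ Γ with some modulus. Then there exists a neighborhood V of x̄ such that for every x ∈ Γ ∩ V, every x* ∈ ℝⁿ with Λ(x, x*) ≠ ∅, and every λ ∈ Λ(x, x*): K(x, x*) = {v ∈ ℝⁿ : ⟨∇q_i(x), v⟩ = 0 for all i ∈ E ∪ I⁺(λ), and ⟨∇q_i(x), v⟩ ≤ 0 for all i ∈ I(x) ∖ I⁺(λ)}. -/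
open Filter Topology Metric Set
open scoped RealInnerProductSpace

/-! Fermat's rule for each `q i` restricted to `Γ` shows that tangent vectors satisfy the
linearized constraints. Conversely, if `v` satisfies them, then `q x + t • q'(x) v ∈ Θ` for all
small `t > 0`, so `q (x + t • v)` is `o(t)`-close to `Θ`; metric subregularity transfers this to
`dist (x + t • v) Γ = o(t)`, which makes `v` tangent. Hence `K(x, x*)` is the linearized cone cut
by `{x*}ᗮ`. Finally `⟪x*, v⟫ = ∑ λ_i ⟪∇q_i(x), v⟫`, and on the linearized cone complementary
slackness makes every term nonpositive, so the sum vanishes iff each term does, i.e. iff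
`⟪∇q_i(x), v⟫ = 0` for `i ∈ I⁺(λ)`. -/

open Asymptotics

section TangentCone

variable {V F : Type*} [NormedAddCommGroup V] [NormedSpace ℝ V]
  [NormedAddCommGroup F] [NormedSpace ℝ F]

theorem bCone_subset_posTangentConeAt (s : Set V) (x : V) :
    BCone s x ⊆ posTangentConeAt s x := by
  rintro u ⟨t, c, ht0, ht, hc, hs⟩
  refine mem_tangentConeAt_of_seq atTop (fun k => (t k)⁻¹.toNNReal)
    (fun k => t k • c k) (by simpa using ht.smul hc) (Eventually.of_forall hs) (hc.congr fun k => ?_)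
  rw [NNReal.smul_def, Real.coe_toNNReal _ (inv_pos.2 (ht0 k)).le, smul_smul,
    inv_mul_cancel₀ (ht0 k).ne', one_smul]

theorem IsMaxOn.fderiv_apply_nonpos_of_mem_bCone {f : V → ℝ} {s : Set V} {x v : V}
    (hmax : IsMaxOn f s x) (hf : DifferentiableAt ℝ f x) (hv : v ∈ BCone s x) :
    fderiv ℝ f x v ≤ 0 :=
  hmax.localize.hasFDerivWithinAt_nonpos hf.hasFDerivAt.hasFDerivWithinAt
    (bCone_subset_posTangentConeAt s x hv)

theorem IsMinOn.fderiv_apply_nonneg_of_mem_bCone {f : V → ℝ} {s : Set V} {x v : V}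
    (hmin : IsMinOn f s x) (hf : DifferentiableAt ℝ f x) (hv : v ∈ BCone s x) :
    0 ≤ fderiv ℝ f x v :=
  hmin.localize.hasFDerivWithinAt_nonneg hf.hasFDerivAt.hasFDerivWithinAt
    (bCone_subset_posTangentConeAt s x hv)

theorem mem_bCone_of_infDist_isLittleO {s : Set V} {x v : V} (hs : s.Nonempty)
    (h : (fun t : ℝ => infDist (x + t • v) s) =o[𝓝[>] 0] fun t => t) : v ∈ BCone s x := by
  set t : ℕ → ℝ := fun k => 1 / (k + 1)
  have ht0 : ∀ k, 0 < t k := fun k => Nat.one_div_pos_of_nat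
  have ht : Tendsto t atTop (𝓝[>] 0) :=
    tendsto_nhdsWithin_iff.2 ⟨tendsto_one_div_add_atTop_nhds_zero_nat, .of_forall ht0⟩
  have hratio : Tendsto (fun k => infDist (x + t k • v) s / t k) atTop (𝓝 0) :=
    (h.comp_tendsto ht).tendsto_div_nhds_zero
  -- a point of `s` within `infDist + t k ^ 2`, since the infimum need not be attained
  choose y hys hyd using fun k => (infDist_lt_iff (x := x + t k • v) hs).1
    (lt_add_of_pos_right _ (pow_pos (ht0 k) 2))
  refine ⟨t, fun k => (t k)⁻¹ • (y k - x), ht0, tendsto_nhds_of_tendsto_nhdsWithin ht, ?_,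
    fun k => by simpa [smul_smul, (ht0 k).ne'] using hys k⟩
  rw [tendsto_iff_norm_sub_tendsto_zero]
  refine squeeze_zero (fun _ => norm_nonneg _) (fun k => ?_)
    (by simpa using hratio.add (tendsto_nhds_of_tendsto_nhdsWithin ht))
  have htk := ht0 k
  have hdecomp : (t k)⁻¹ • (y k - x) - v = (t k)⁻¹ • (y k - (x + t k • v)) := by
    rw [smul_sub, smul_sub, smul_add, smul_smul, inv_mul_cancel₀ htk.ne', one_smul,
      sub_add_eq_sub_sub]
  calc ‖(t k)⁻¹ • (y k - x) - v‖ = dist (x + t k • v) (y k) / t k := by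
        rw [hdecomp, norm_smul, Real.norm_of_nonneg (inv_pos.2 htk).le, ← dist_eq_norm,
          dist_comm, div_eq_inv_mul]
    _ ≤ (infDist (x + t k • v) s + t k ^ 2) / t k := by gcongr; exact (hyd k).le
    _ = infDist (x + t k • v) s / t k + t k := by field_simp

theorem HasLineDerivAt.infDist_isLittleO {f : V → F} {C : Set F} {x v : V} {w : F}
    (hf : HasLineDerivAt ℝ f w x v) (hC : ∀ᶠ t in 𝓝[>] (0 : ℝ), f x + t • w ∈ C) :
    (fun t : ℝ => infDist (f (x + t • v)) C) =o[𝓝[>] 0] fun t => t := by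
  have hrem := (hasLineDerivAt_iff_isLittleO_nhds_zero.1 hf).mono (nhdsWithin_le_nhds (s := Ioi 0))
  refine IsBigO.trans_isLittleO (IsBigO.of_bound 1 ?_) hrem
  filter_upwards [hC] with t ht
  calc ‖infDist (f (x + t • v)) C‖ = infDist (f (x + t • v)) C :=
        Real.norm_of_nonneg infDist_nonneg
    _ ≤ infDist (f x + t • w) C + dist (f (x + t • v)) (f x + t • w) :=
        infDist_le_infDist_add_dist
    _ = 1 * ‖f (x + t • v) - f x - t • w‖ := by
        rw [infDist_zero_of_mem ht, dist_eq_norm, sub_sub, zero_add, one_mul]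

theorem mem_bCone_preimage_of_hasLineDerivAt {f : V → F} {C : Set F} {x v : V} {w : F} {κ : ℝ}
    (hx : x ∈ f ⁻¹' C) (hsub : ∀ᶠ u in 𝓝 x, infDist u (f ⁻¹' C) ≤ κ * infDist (f u) C)
    (hf : HasLineDerivAt ℝ f w x v) (hC : ∀ᶠ t in 𝓝[>] (0 : ℝ), f x + t • w ∈ C) :
    v ∈ BCone (f ⁻¹' C) x := by
  refine mem_bCone_of_infDist_isLittleO ⟨x, hx⟩
    ((IsBigO.of_bound κ ?_).trans_isLittleO (hf.infDist_isLittleO hC))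
  have hline : Tendsto (fun t : ℝ => x + t • v) (𝓝[>] 0) (𝓝 x) :=
    (Continuous.tendsto' (f := fun t : ℝ => x + t • v) (by fun_prop) 0 x (by simp)).mono_left
      nhdsWithin_le_nhds
  filter_upwards [hline.eventually hsub] with t ht
  rwa [Real.norm_of_nonneg infDist_nonneg, Real.norm_of_nonneg infDist_nonneg]

end TangentCone

theorem eventually_add_smul_mem_theta {ι : Type*} {E I : Finset ι} {y w : EuclideanSpace ℝ ι}
    (hy : y ∈ Theta E I) (hwE : ∀ i ∈ E, w i = 0) (hwI : ∀ i ∈ I, y i = 0 → w i ≤ 0) :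
    ∀ᶠ t in 𝓝[>] (0 : ℝ), y + t • w ∈ Theta E I := by
  have hI : ∀ i ∈ I, ∀ᶠ t in 𝓝[>] (0 : ℝ), y i + t * w i ≤ 0 := by
    intro i hi
    rcases (hy.2 i hi).lt_or_eq with hneg | hzero
    · have hcont : Tendsto (fun t : ℝ => y i + t * w i) (𝓝 0) (𝓝 (y i)) :=
        Continuous.tendsto' (by fun_prop) 0 (y i) (by simp)
      exact (hcont.eventually (eventually_le_nhds hneg)).filter_mono nhdsWithin_le_nhds
    · filter_upwards [self_mem_nhdsWithin] with t (ht : 0 < t)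
      rw [hzero, zero_add]
      exact mul_nonpos_of_nonneg_of_nonpos ht.le (hwI i hi hzero)
  filter_upwards [(eventually_all_finset I).2 hI] with t ht
  exact ⟨fun i hi => by simp [hy.1 i hi, hwE i hi], fun i hi => by simpa using ht i hi⟩

section NonlinearProgram

variable {n : ℕ} {ι : Type*} {E I : Finset ι} {q : ι → EuclideanSpace ℝ (Fin n) → ℝ}
  {x xs : EuclideanSpace ℝ (Fin n)}

def LinCone (E I : Finset ι) (q : ι → EuclideanSpace ℝ (Fin n) → ℝ)
    (x : EuclideanSpace ℝ (Fin n)) : Set (EuclideanSpace ℝ (Fin n)) :=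
  {v | (∀ i ∈ E, ⟪gradient (q i) x, v⟫ = 0) ∧ ∀ i ∈ ActiveI I q x, ⟪gradient (q i) x, v⟫ ≤ 0}

@[simp]
theorem mem_activeI {i : ι} : i ∈ ActiveI I q x ↔ i ∈ I ∧ q i x = 0 :=
  Finset.mem_filter

@[simp]
theorem mem_iplusF {lam : EuclideanSpace ℝ ι} {i : ι} : i ∈ IplusF I lam ↔ i ∈ I ∧ 0 < lam i :=
  Finset.mem_filter

theorem feas_eq_preimage_theta :
    Feas E I q = (fun u => (WithLp.toLp 2 fun i => q i u : EuclideanSpace ℝ ι)) ⁻¹' Theta E I :=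
  rfl

theorem bCone_feas_subset_linCone (hq : ∀ i, DifferentiableAt ℝ (q i) x) (hx : x ∈ Feas E I q) :
    BCone (Feas E I q) x ⊆ LinCone E I q x := by
  intro v hv
  refine ⟨fun i hi => ?_, fun i hi => ?_⟩
  · have hmax : IsMaxOn (q i) (Feas E I q) x := isMaxOn_iff.2 fun y hy => by
      rw [hy.1 i hi, hx.1 i hi]
    have hmin : IsMinOn (q i) (Feas E I q) x := isMinOn_iff.2 fun y hy => by
      rw [hy.1 i hi, hx.1 i hi]
    rw [inner_gradient_left]
    exact le_antisymm (hmax.fderiv_apply_nonpos_of_mem_bCone (hq i) hv)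
      (hmin.fderiv_apply_nonneg_of_mem_bCone (hq i) hv)
  · obtain ⟨hiI, hact⟩ := mem_activeI.1 hi
    have hmax : IsMaxOn (q i) (Feas E I q) x := isMaxOn_iff.2 fun y hy => hact ▸ hy.2 i hiI
    rw [inner_gradient_left]
    exact hmax.fderiv_apply_nonpos_of_mem_bCone (hq i) hv

variable [Fintype ι]

theorem linCone_subset_bCone_feas {κ : ℝ} (hq : ∀ i, DifferentiableAt ℝ (q i) x)
    (hx : x ∈ Feas E I q)
    (hsub : ∀ᶠ u in 𝓝 x, infDist u (Feas E I q) ≤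
      κ * infDist (WithLp.toLp 2 (fun i => q i u) : EuclideanSpace ℝ ι) (Theta E I)) :
    LinCone E I q x ⊆ BCone (Feas E I q) x := by
  rintro v ⟨hvE, hvA⟩
  have hQ : HasLineDerivAt ℝ (fun u => (WithLp.toLp 2 fun i => q i u : EuclideanSpace ℝ ι))
      (WithLp.toLp 2 fun i => ⟪gradient (q i) x, v⟫) x v := by
    simp only [inner_gradient_left]
    exact (PiLp.hasFDerivAt_toLp 2 _).comp_hasDerivAt (0 : ℝ)
      (hasDerivAt_pi.2 fun i => (hq i).hasFDerivAt.hasLineDerivAt v)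
  rw [feas_eq_preimage_theta] at hx hsub ⊢
  exact mem_bCone_preimage_of_hasLineDerivAt hx hsub hQ
    (eventually_add_smul_mem_theta hx hvE fun i hi h0 => hvA i (mem_activeI.2 ⟨hi, h0⟩))

theorem inner_eq_sum_of_mem_mult {lam : EuclideanSpace ℝ ι} (hlam : lam ∈ Mult I q x xs)
    (v : EuclideanSpace ℝ (Fin n)) : ⟪xs, v⟫ = ∑ i, lam i * ⟪gradient (q i) x, v⟫ := by
  simp only [← hlam.1, sum_inner, real_inner_smul_left]

theorem linCone_inter_orthogonal_eq [DecidableEq ι] (hunion : E ∪ I = Finset.univ)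
    {lam : EuclideanSpace ℝ ι} (hlam : lam ∈ Mult I q x xs) :
    LinCone E I q x ∩ {v | ⟪xs, v⟫ = 0} =
      {v | (∀ i ∈ E ∪ IplusF I lam, ⟪gradient (q i) x, v⟫ = 0) ∧
        ∀ i ∈ ActiveI I q x \ IplusF I lam, ⟪gradient (q i) x, v⟫ ≤ 0} := by
  have hEI : ∀ i, i ∈ E ∨ i ∈ I := fun i => Finset.mem_union.1 (hunion ▸ Finset.mem_univ i)
  ext v
  simp only [LinCone, mem_inter_iff, mem_ofPred_eq, inner_eq_sum_of_mem_mult hlam v,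
    Finset.mem_union, Finset.mem_sdiff]
  constructor
  · rintro ⟨⟨hE, hA⟩, hsum⟩
    have hterm : ∀ i ∈ Finset.univ, lam i * ⟪gradient (q i) x, v⟫ ≤ 0 := by
      intro i _
      rcases hEI i with hi | hi
      · rw [hE i hi, mul_zero]
      by_cases hact : q i x = 0
      · exact mul_nonpos_of_nonneg_of_nonpos (hlam.2 i hi).1 (hA i (mem_activeI.2 ⟨hi, hact⟩))
      · rw [(mul_eq_zero.1 (hlam.2 i hi).2).resolve_right hact, zero_mul]
    have hzero := (Finset.sum_eq_zero_iff_of_nonpos hterm).1 hsum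
    refine ⟨?_, fun i hi => hA i hi.1⟩
    rintro i (hi | hi)
    · exact hE i hi
    · exact (mul_eq_zero.1 (hzero i (Finset.mem_univ i))).resolve_left (mem_iplusF.1 hi).2.ne'
  · rintro ⟨hEP, hA⟩
    refine ⟨⟨fun i hi => hEP i (Or.inl hi), fun i hi => ?_⟩, Finset.sum_eq_zero fun i _ => ?_⟩
    · by_cases hP : i ∈ IplusF I lam
      · exact (hEP i (Or.inr hP)).le
      · exact hA i ⟨hi, hP⟩
    · rcases hEI i with hi | hi
      · rw [hEP i (Or.inl hi), mul_zero]
      by_cases hP : i ∈ IplusF I lam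
      · rw [hEP i (Or.inr hP), mul_zero]
      · have hlam0 : lam i = 0 :=
          le_antisymm (not_lt.1 fun hpos => hP (mem_iplusF.2 ⟨hi, hpos⟩)) (hlam.2 i hi).1
        rw [hlam0, zero_mul]

theorem critical_cone_description_general
    {n : ℕ} {ι : Type*} [Fintype ι] [DecidableEq ι]
    (E I : Finset ι) (hunion : E ∪ I = Finset.univ)
    (q : ι → EuclideanSpace ℝ (Fin n) → ℝ) (hq : ∀ i, ContDiff ℝ 2 (q i))
    (xbar : EuclideanSpace ℝ (Fin n))
    (hmscq : ∃ κ > (0:ℝ), MSCQat E I q xbar κ) :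
    ∃ V ∈ 𝓝 xbar, ∀ x ∈ Feas E I q ∩ V, ∀ xs : EuclideanSpace ℝ (Fin n),
      (Mult I q x xs).Nonempty → ∀ lam ∈ Mult I q x xs,
        Crit E I q x xs =
          {v : EuclideanSpace ℝ (Fin n) |
            (∀ i ∈ E ∪ IplusF I lam, ⟪gradient (q i) x, v⟫ = 0) ∧
            ∀ i ∈ ActiveI I q x \ IplusF I lam, ⟪gradient (q i) x, v⟫ ≤ 0} := by
  obtain ⟨κ, -, U, hU, hUκ⟩ := hmscq
  refine ⟨interior U, interior_mem_nhds.2 hU, ?_⟩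
  rintro x ⟨hx, hxU⟩ xs - lam hlam
  have hdiff : ∀ i, DifferentiableAt ℝ (q i) x :=
    fun i => ((hq i).differentiable two_ne_zero).differentiableAt
  have hsub : ∀ᶠ u in 𝓝 x, infDist u (Feas E I q) ≤
      κ * infDist (WithLp.toLp 2 (fun i => q i u) : EuclideanSpace ℝ ι) (Theta E I) :=
    eventually_of_mem (isOpen_interior.mem_nhds hxU) fun u hu => hUκ u (interior_subset hu)
  rw [Crit, (bCone_feas_subset_linCone hdiff hx).antisymm (linCone_subset_bCone_feas hdiff hx hsub)]
  exact linCone_inter_orthogonal_eq hunion hlam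

/-- **Lemma 2.1(i).** Under MSCQ at `x̄ ∈ Γ`, for `x ∈ Γ` near `x̄`, any `x*` with
`Λ(x, x*) ≠ ∅` and any `λ ∈ Λ(x, x*)`, the critical cone `K(x,x*)` is described by
`⟨∇q_i(x), v⟩ = 0` for `i ∈ E ∪ I⁺(λ)` and `⟨∇q_i(x), v⟩ ≤ 0` for `i ∈ I(x) ∖ I⁺(λ)`. -/
theorem critical_cone_description
    {n : ℕ} {ι : Type*} [Fintype ι] [DecidableEq ι] [Nonempty ι]
    (E I : Finset ι) (hdisj : Disjoint E I) (hunion : E ∪ I = Finset.univ)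
    (q : ι → EuclideanSpace ℝ (Fin n) → ℝ) (hq : ∀ i, ContDiff ℝ 2 (q i))
    (xbar : EuclideanSpace ℝ (Fin n)) (hfeas : xbar ∈ Feas E I q)
    (hmscq : ∃ κ > (0:ℝ), MSCQat E I q xbar κ) :
    ∃ V ∈ 𝓝 xbar, ∀ x ∈ Feas E I q ∩ V, ∀ xs : EuclideanSpace ℝ (Fin n),
      (Mult I q x xs).Nonempty → ∀ lam ∈ Mult I q x xs,
        Crit E I q x xs =
          {v : EuclideanSpace ℝ (Fin n) |
            (∀ i ∈ E ∪ IplusF I lam, ⟪gradient (q i) x, v⟫ = 0) ∧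
            ∀ i ∈ ActiveI I q x \ IplusF I lam, ⟪gradient (q i) x, v⟫ ≤ 0} :=
  critical_cone_description_general E I hunion q hq xbar hmscq

end NonlinearProgram
end

section
/- (Lemma 2.1(iii)) Let MSCQ hold at x̄ ∈ Γ with some modulus. Then there exists a neighborhood V of x̄ such that for every x ∈ Γ ∩ V, every x* ∈ ℝⁿ with Λ(x, x*) ≠ ∅, and every v ∈ K(x, x*), the supremum of λ ↦ ⟨v, ∇²⟨λ, q⟩(x) v⟩ over Λ(x, x*) is attained; that is, Λ(x, x*; v) ≠ ∅. -/
open Filter Topology Metric Set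
open scoped RealInnerProductSpace

noncomputable section

variable {n : ℕ} {ι : Type*} [Fintype ι] [DecidableEq ι]

/-!
`Λ(x, x*)` is a polyhedron and `λ ↦ ⟨v, ∇²⟨λ, q⟩(x) v⟩` is linear, so the maximum is attained
as soon as the objective is nonpositive on the recession cone `Λ(x, 0)`; this is proved by
induction on the number of sign constraints, pushing every point onto a face without decreasing
the objective. For `μ ∈ Λ(x, 0)` the function `⟨μ, q⟩` is nonpositive on `Γ` and vanishes to
first order at `x ∈ Γ`, so along a tangent direction `v` a double mean value argument gives
`⟨v, ∇²⟨μ, q⟩(x) v⟩ ≤ 0`.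
-/

section Polyhedron

variable {V W κ : Type*} [AddCommGroup V] [Module ℝ V] [AddCommGroup W] [Module ℝ W]
  (e : κ → V →ₗ[ℝ] ℝ)

def polyhedron (L : V →ₗ[ℝ] W) (c : W) (S : Finset κ) : Set V :=
  {l | L l = c ∧ ∀ i ∈ S, 0 ≤ e i l}

variable {e} {L : V →ₗ[ℝ] W} {c : W} {S : Finset κ}

theorem polyhedron_subset_of_subset {T : Finset κ} (hST : S ⊆ T) :
    polyhedron e L c T ⊆ polyhedron e L c S :=
  fun _ hl => ⟨hl.1, fun i hi => hl.2 i (hST hi)⟩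

theorem convex_polyhedron : Convex ℝ (polyhedron e L c S) := by
  rintro l ⟨hLl, hl⟩ m ⟨hLm, hm⟩ a b ha hb hab
  refine ⟨by rw [map_add, map_smul, map_smul, hLl, hLm, ← add_smul, hab, one_smul], fun i hi => ?_⟩
  simp only [map_add, map_smul, smul_eq_mul]
  exact add_nonneg (mul_nonneg ha (hl i hi)) (mul_nonneg hb (hm i hi))

theorem add_smul_mem_polyhedron {l d : V} {t : ℝ} (hl : l ∈ polyhedron e L c S)
    (hd : d ∈ polyhedron e L 0 S) (ht : 0 ≤ t) : l + t • d ∈ polyhedron e L c S := by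
  refine ⟨by rw [map_add, map_smul, hl.1, hd.1, smul_zero, add_zero], fun i hi => ?_⟩
  simp only [map_add, map_smul, smul_eq_mul]
  exact add_nonneg (hl.2 i hi) (mul_nonneg ht (hd.2 i hi))

theorem mem_polyhedron_prod_iff [DecidableEq κ] {j : κ} {l : V} :
    l ∈ polyhedron e (L.prod (e j)) (c, 0) S ↔ l ∈ polyhedron e L c (insert j S) ∧ e j l = 0 := by
  change (L l, e j l) = (c, 0) ∧ _ ↔ (L l = c ∧ ∀ i ∈ insert j S, 0 ≤ e i l) ∧ _
  simp only [Prod.mk.injEq, Finset.forall_mem_insert]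
  constructor
  · rintro ⟨⟨hL, hj⟩, hS⟩
    exact ⟨⟨hL, hj.ge, hS⟩, hj⟩
  · rintro ⟨⟨hL, -, hS⟩, hj⟩
    exact ⟨⟨hL, hj⟩, hS⟩

theorem exists_mem_polyhedron_prod_le [DecidableEq κ] {j : κ} {f : V →ₗ[ℝ] ℝ} {l d : V}
    (hl : l ∈ polyhedron e L c (insert j S)) (hd : e j d < 0) (hfd : 0 ≤ f d)
    (hmem : l + (e j l / -e j d) • d ∈ polyhedron e L c S) :
    ∃ l' ∈ polyhedron e (L.prod (e j)) (c, 0) S, f l ≤ f l' := by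
  have ht : 0 ≤ e j l / -e j d :=
    div_nonneg (hl.2 j (Finset.mem_insert_self j S)) (neg_nonneg.2 hd.le)
  have hj0 : e j (l + (e j l / -e j d) • d) = 0 := by
    rw [map_add, map_smul, smul_eq_mul, div_mul_eq_mul_div, div_neg,
      mul_div_cancel_right₀ _ hd.ne, add_neg_cancel]
  refine ⟨_, mem_polyhedron_prod_iff.2 ⟨⟨hmem.1, ?_⟩, hj0⟩, ?_⟩
  · exact (Finset.forall_mem_insert _ _ _).2 ⟨hj0.ge, hmem.2⟩
  · rw [map_add, map_smul, smul_eq_mul]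
    exact le_add_of_nonneg_right (mul_nonneg ht hfd)

theorem exists_isMaxOn_polyhedron {f : V →ₗ[ℝ] ℝ}
    (hrec : ∀ d ∈ polyhedron e L 0 S, f d ≤ 0) (hne : (polyhedron e L c S).Nonempty) :
    ∃ l ∈ polyhedron e L c S, IsMaxOn f (polyhedron e L c S) l := by
  classical
  induction S using Finset.induction_on generalizing W L c with
  | empty =>
    obtain ⟨l₀, hl₀⟩ := hne
    refine ⟨l₀, hl₀, fun l hl => ?_⟩
    have := hrec (l - l₀) ⟨by rw [map_sub, hl.1, hl₀.1, sub_self], by simp⟩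
    rwa [map_sub, sub_nonpos] at this
  | insert j S _ ih =>
    have hsub := polyhedron_subset_of_subset (e := e) (L := L) (c := c) (Finset.subset_insert j S)
    have hface : (∀ l ∈ polyhedron e L c (insert j S),
        ∃ l' ∈ polyhedron e (L.prod (e j)) (c, 0) S, f l ≤ f l') →
        ∃ m ∈ polyhedron e L c (insert j S), IsMaxOn f (polyhedron e L c (insert j S)) m := by
      intro hpush
      obtain ⟨l₀, hl₀⟩ := hne
      obtain ⟨l₀', hl₀', -⟩ := hpush l₀ hl₀
      obtain ⟨m, hm, hmax⟩ := ih (L := L.prod (e j)) (c := (c, 0))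
        (fun d hd => hrec d (mem_polyhedron_prod_iff.1 (by rwa [← Prod.mk_zero_zero] at hd)).1)
        ⟨l₀', hl₀'⟩
      refine ⟨m, (mem_polyhedron_prod_iff.1 hm).1, fun l hl => ?_⟩
      obtain ⟨l', hl', hle⟩ := hpush l hl
      exact hle.trans (hmax hl')
    by_cases hrecS : ∀ d ∈ polyhedron e L 0 S, f d ≤ 0
    · obtain ⟨p, hp, hpmax⟩ := ih hrecS (hne.mono hsub)
      by_cases hpj : 0 ≤ e j p
      · exact ⟨p, ⟨hp.1, Finset.forall_mem_insert _ _ _ |>.2 ⟨hpj, hp.2⟩⟩, hpmax.on_subset hsub⟩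
      -- push `l` along the segment towards the maximizer `p` of the relaxed problem
      refine hface fun l hl => ?_
      have hjl : 0 ≤ e j l := hl.2 j (Finset.mem_insert_self j S)
      have hjd : e j (p - l) < 0 := by rw [map_sub]; linarith
      refine exists_mem_polyhedron_prod_le hl hjd
        (by rw [map_sub, sub_nonneg]; exact hpmax (hsub hl))
        (convex_polyhedron.add_smul_sub_mem (hsub hl) hp ⟨div_nonneg hjl (by linarith), ?_⟩)
      rw [div_le_one (by linarith), map_sub]
      linarith
    · obtain ⟨d, hd, hfd⟩ := not_forall₂.1 hrecS
      rw [not_le] at hfd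
      have hjd : e j d < 0 := by
        by_contra! h
        exact hfd.not_ge (hrec d ⟨hd.1, Finset.forall_mem_insert _ _ _ |>.2 ⟨h, hd.2⟩⟩)
      -- push `l` along the recession direction `d` of the relaxed problem
      exact hface fun l hl => exists_mem_polyhedron_prod_le hl hjd hfd.le
        (add_smul_mem_polyhedron (hsub hl) hd (div_nonneg (hl.2 j (Finset.mem_insert_self j S))
          (neg_nonneg.2 hjd.le)))

end Polyhedron

theorem exists_mem_Ioo_secondDeriv_nonpos {φ φ' φ'' : ℝ → ℝ} {t : ℝ} (ht : 0 < t)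
    (hφ : ∀ s, HasDerivAt φ (φ' s) s) (hφ' : ∀ s, HasDerivAt φ' (φ'' s) s)
    (h0 : φ 0 = 0) (h0' : φ' 0 = 0) (hφt : φ t ≤ 0) : ∃ s ∈ Ioo 0 t, φ'' s ≤ 0 := by
  obtain ⟨s₁, hs₁, hslope₁⟩ := exists_hasDerivAt_eq_slope φ φ' ht
    (HasDerivAt.continuousOn fun s _ => hφ s) fun s _ => hφ s
  obtain ⟨s₂, hs₂, hslope₂⟩ := exists_hasDerivAt_eq_slope φ' φ'' hs₁.1
    (HasDerivAt.continuousOn fun s _ => hφ' s) fun s _ => hφ' s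
  refine ⟨s₂, ⟨hs₂.1, hs₂.2.trans hs₁.2⟩, ?_⟩
  have hφ's₁ : φ' s₁ ≤ 0 := by
    rw [hslope₁, h0, sub_zero, sub_zero]
    exact div_nonpos_of_nonpos_of_nonneg hφt ht.le
  rw [hslope₂, h0', sub_zero, sub_zero]
  exact div_nonpos_of_nonpos_of_nonneg hφ's₁ hs₁.1.le

theorem BCone_mono {V : Type*} [NormedAddCommGroup V] [NormedSpace ℝ V] {s t : Set V}
    (hst : s ⊆ t) (x : V) : BCone s x ⊆ BCone t x := by
  rintro u ⟨τ, c, hτ, hτ0, hc, hmem⟩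
  exact ⟨τ, c, hτ, hτ0, hc, fun k => hst (hmem k)⟩

theorem DifferentiableAt.hasDerivAt_add_smul {E G : Type*} [NormedAddCommGroup E]
    [NormedSpace ℝ E] [NormedAddCommGroup G] [NormedSpace ℝ G] {f : E → G} {x w : E} {s : ℝ}
    (hf : DifferentiableAt ℝ f (x + s • w)) :
    HasDerivAt (fun s : ℝ => f (x + s • w)) (fderiv ℝ f (x + s • w) w) s := by
  have hline : HasDerivAt (fun s : ℝ => x + s • w) w s := by
    simpa using ((hasDerivAt_id s).smul_const w).const_add x
  exact hf.hasFDerivAt.comp_hasDerivAt s hline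

section SecondOrder

variable {F : Type*} [NormedAddCommGroup F] [InnerProductSpace ℝ F] [CompleteSpace F]

-- Over `ℝ` the conjugate-linear Riesz map `toDual` is a linear isometry equivalence.
open InnerProductSpace in
theorem ContDiff.contDiff_gradient {g : F → ℝ} (hg : ContDiff ℝ 2 g) : ContDiff ℝ 1 (gradient g) :=
  (LinearIsometryEquiv.contDiff (𝕜 := ℝ) (toDual ℝ F).symm).comp (hg.fderiv_right (by norm_num))

theorem inner_fderiv_gradient_nonpos_of_mem_BCone {g : F → ℝ} (hg : ContDiff ℝ 2 g) {x v : F}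
    (hgx : g x = 0) (hgrad : gradient g x = 0) (hv : v ∈ BCone {y | g y ≤ 0} x) :
    ⟪v, fderiv ℝ (gradient g) x v⟫ ≤ 0 := by
  obtain ⟨t, c, ht, ht0, hc, hmem⟩ := hv
  have hg1 : Differentiable ℝ g := hg.differentiable (by norm_num)
  have hgrad1 : Differentiable ℝ (gradient g) := hg.contDiff_gradient.differentiable one_ne_zero
  have hH : Continuous (fderiv ℝ (gradient g)) :=
    hg.contDiff_gradient.continuous_fderiv one_ne_zero
  have hstep : ∀ k, ∃ s ∈ Ioo 0 (t k),
      ⟪fderiv ℝ (gradient g) (x + s • c k) (c k), c k⟫ ≤ 0 := by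
    intro k
    refine exists_mem_Ioo_secondDeriv_nonpos (ht k) (φ := fun s => g (x + s • c k))
      (φ' := fun s => ⟪gradient g (x + s • c k), c k⟫) (fun s => ?_) (fun s => ?_)
      (by simpa using hgx) (by simp [hgrad]) (hmem k)
    · simpa only [inner_gradient_left] using (hg1 _).hasDerivAt_add_smul
    · simpa using ((hgrad1 _).hasDerivAt_add_smul).inner ℝ (hasDerivAt_const s (c k))
  choose s hs hsneg using hstep
  have hs0 : Tendsto s atTop (𝓝 0) :=
    tendsto_of_tendsto_of_tendsto_of_le_of_le tendsto_const_nhds ht0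
      (fun k => (hs k).1.le) (fun k => (hs k).2.le)
  have hy : Tendsto (fun k => x + s k • c k) atTop (𝓝 x) := by
    simpa using tendsto_const_nhds.add (hs0.smul hc)
  have hcont : Continuous fun p : F × F => ⟪fderiv ℝ (gradient g) p.1 p.2, p.2⟫ := by fun_prop
  rw [real_inner_comm]
  exact le_of_tendsto ((hcont.tendsto (x, v)).comp (hy.prodMk_nhds hc))
    (Eventually.of_forall hsneg)

theorem gradient_sum_mul {ι : Type*} [Fintype ι] {q : ι → F → ℝ}
    (hq : ∀ i, Differentiable ℝ (q i)) (μ : ι → ℝ) :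
    gradient (fun y => ∑ i, μ i * q i y) = fun y => ∑ i, μ i • gradient (q i) y := by
  funext y
  refine HasGradientAt.gradient ?_
  rw [hasGradientAt_iff_hasFDerivAt, map_sum]
  refine HasFDerivAt.fun_sum fun i _ => ?_
  rw [LinearIsometryEquiv.map_smulₛₗ, conj_trivial, toDual_gradient]
  exact (hq i y).hasFDerivAt.const_mul (μ i)

end SecondOrder

theorem hessComb_eq_fderiv_gradient {n : ℕ} {ι : Type*} [Fintype ι]
    {q : ι → EuclideanSpace ℝ (Fin n) → ℝ} (hq : ∀ i, ContDiff ℝ 2 (q i)) (μ : EuclideanSpace ℝ ι)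
    (x w : EuclideanSpace ℝ (Fin n)) :
    HessComb q μ x w = fderiv ℝ (gradient fun y => ∑ i, μ i * q i y) x w := by
  have hd i : DifferentiableAt ℝ (gradient (q i)) x :=
    (hq i).contDiff_gradient.differentiable one_ne_zero x
  rw [gradient_sum_mul (fun i => (hq i).differentiable (by norm_num)),
    fderiv_fun_sum (A := fun i y => μ i • gradient (q i) y) fun i _ => (hd i).const_smul (μ i),
    sum_apply]
  exact Finset.sum_congr rfl fun i _ => by rw [fderiv_fun_const_smul (hd i)]; rfl

theorem quadComb_nonpos_of_mem_mult_zero {n : ℕ} {ι : Type*} [Fintype ι] [DecidableEq ι]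
    {E I : Finset ι} (hunion : E ∪ I = Finset.univ) {q : ι → EuclideanSpace ℝ (Fin n) → ℝ}
    (hq : ∀ i, ContDiff ℝ 2 (q i)) {x v : EuclideanSpace ℝ (Fin n)} (hx : x ∈ Feas E I q)
    (hv : v ∈ BCone (Feas E I q) x) {μ : EuclideanSpace ℝ ι} (hμ : μ ∈ Mult I q x 0) :
    QuadComb q μ x v ≤ 0 := by
  have hEI i : i ∈ E ∨ i ∈ I := Finset.mem_union.1 (hunion ▸ Finset.mem_univ i)
  have hle : Feas E I q ⊆ {y | ∑ i, μ i * q i y ≤ 0} := fun y hy =>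
    Finset.sum_nonpos fun i _ => (hEI i).elim (fun hi => by rw [hy.1 i hi, mul_zero])
      fun hi => mul_nonpos_of_nonneg_of_nonpos (hμ.2 i hi).1 (hy.2 i hi)
  have hgx : ∑ i, μ i * q i x = 0 :=
    Finset.sum_eq_zero fun i _ => (hEI i).elim (fun hi => by rw [hx.1 i hi, mul_zero])
      fun hi => (hμ.2 i hi).2
  have hgrad : gradient (fun y => ∑ i, μ i * q i y) x = 0 := by
    rw [gradient_sum_mul fun i => (hq i).differentiable (by norm_num)]
    exact hμ.1
  rw [QuadComb, hessComb_eq_fderiv_gradient hq]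
  exact inner_fderiv_gradient_nonpos_of_mem_BCone
    (ContDiff.sum fun i _ => contDiff_const.mul (hq i)) hgx hgrad (BCone_mono hle x hv)

-- The complementarity conditions `λ i * q i x = 0` are linear in `λ`.
def multMap {n : ℕ} {ι : Type*} [Fintype ι] (I : Finset ι)
    (q : ι → EuclideanSpace ℝ (Fin n) → ℝ) (x : EuclideanSpace ℝ (Fin n)) :
    EuclideanSpace ℝ ι →ₗ[ℝ] EuclideanSpace ℝ (Fin n) × (I → ℝ) where
  toFun μ := (∑ i, μ i • gradient (q i) x, fun i => μ i * q i x)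
  map_add' μ ν := Prod.ext (by simp [add_smul, Finset.sum_add_distrib])
    (funext fun i => by simp [add_mul])
  map_smul' a μ := Prod.ext (by simp [smul_smul, Finset.smul_sum])
    (funext fun i => by simp [mul_assoc])

theorem mult_eq_polyhedron {n : ℕ} {ι : Type*} [Fintype ι] (I : Finset ι)
    (q : ι → EuclideanSpace ℝ (Fin n) → ℝ) (x xs : EuclideanSpace ℝ (Fin n)) :
    Mult I q x xs =
      polyhedron (fun i => (EuclideanSpace.proj (𝕜 := ℝ) i).toLinearMap) (multMap I q x)
        (xs, 0) I := by
  ext μ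
  simp [Mult, polyhedron, multMap, funext_iff, imp_and, forall_and]
  tauto

def quadCombMap {n : ℕ} {ι : Type*} [Fintype ι] (q : ι → EuclideanSpace ℝ (Fin n) → ℝ)
    (x v : EuclideanSpace ℝ (Fin n)) : EuclideanSpace ℝ ι →ₗ[ℝ] ℝ where
  toFun μ := QuadComb q μ x v
  map_add' μ ν := by simp [QuadComb, HessComb, add_smul, Finset.sum_add_distrib, inner_add_right]
  map_smul' a μ := by simp [QuadComb, HessComb, mul_smul, ← Finset.smul_sum, inner_smul_right]

theorem multArgmax_nonempty_of_mem_BCone {n : ℕ} {ι : Type*} [Fintype ι] [DecidableEq ι]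
    {E I : Finset ι} (hunion : E ∪ I = Finset.univ) {q : ι → EuclideanSpace ℝ (Fin n) → ℝ}
    (hq : ∀ i, ContDiff ℝ 2 (q i)) {x xs v : EuclideanSpace ℝ (Fin n)} (hx : x ∈ Feas E I q)
    (hne : (Mult I q x xs).Nonempty) (hv : v ∈ BCone (Feas E I q) x) :
    (MultArgmax I q x xs v).Nonempty := by
  rw [mult_eq_polyhedron] at hne
  obtain ⟨l, hl, hmax⟩ := exists_isMaxOn_polyhedron (f := quadCombMap q x v)
    (fun μ hμ => quadComb_nonpos_of_mem_mult_zero hunion hq hx hv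
      (by rwa [mult_eq_polyhedron, Prod.mk_zero_zero])) hne
  rw [← mult_eq_polyhedron] at hl hmax
  exact ⟨l, hl, fun μ hμ => hmax hμ⟩

theorem multArgmax_nonempty_general
    {n : ℕ} {ι : Type*} [Fintype ι] [DecidableEq ι]
    (E I : Finset ι) (hunion : E ∪ I = Finset.univ)
    (q : ι → EuclideanSpace ℝ (Fin n) → ℝ) (hq : ∀ i, ContDiff ℝ 2 (q i))
    (xbar : EuclideanSpace ℝ (Fin n)) :
    ∃ V ∈ 𝓝 xbar, ∀ x ∈ Feas E I q ∩ V, ∀ xs : EuclideanSpace ℝ (Fin n),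
      (Mult I q x xs).Nonempty → ∀ v ∈ Crit E I q x xs,
        (MultArgmax I q x xs v).Nonempty :=
  ⟨univ, univ_mem, fun _ hx _ hne _ hv =>
    multArgmax_nonempty_of_mem_BCone hunion hq hx.1 hne hv.1⟩

/-- **Lemma 2.1(iii).** Under MSCQ at `x̄ ∈ Γ`, for `x ∈ Γ` near `x̄`, any `x*` with
`Λ(x, x*) ≠ ∅` and any `v ∈ K(x, x*)`, the maximum of `λ ↦ ⟨v, ∇²⟨λ,q⟩(x)v⟩` over
`Λ(x, x*)` is attained, i.e. `Λ(x, x*; v) ≠ ∅`. -/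
theorem multArgmax_nonempty
    {n : ℕ} {ι : Type*} [Fintype ι] [DecidableEq ι] [Nonempty ι]
    (E I : Finset ι) (hdisj : Disjoint E I) (hunion : E ∪ I = Finset.univ)
    (q : ι → EuclideanSpace ℝ (Fin n) → ℝ) (hq : ∀ i, ContDiff ℝ 2 (q i))
    (xbar : EuclideanSpace ℝ (Fin n)) (hfeas : xbar ∈ Feas E I q)
    (hmscq : ∃ κ > (0:ℝ), MSCQat E I q xbar κ) :
    ∃ V ∈ 𝓝 xbar, ∀ x ∈ Feas E I q ∩ V, ∀ xs : EuclideanSpace ℝ (Fin n),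
      (Mult I q x xs).Nonempty → ∀ v ∈ Crit E I q x xs,
        (MultArgmax I q x xs v).Nonempty :=
  multArgmax_nonempty_general E I hunion q hq xbar
end
end

section
/- (Multiplier bound under MSCQ, used in the proof of Theorem 3.1(iii)) Suppose MSCQ holds at x ∈ Γ with modulus γ > 0, and let x* ∈ ℝⁿ be such that Λ(x, x*) ≠ ∅. Then there exists λ ∈ Λ(x, x*) with ‖λ‖ ≤ γ‖x*‖. -/
open Filter Topology Metric Set
open scoped RealInnerProductSpace

noncomputable section

variable {n : ℕ} {ι : Type*} [Fintype ι] [DecidableEq ι]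

/-!
Any `λ ∈ Λ(x, x*)` shows that `x*` is a regular normal to `Γ` at `x`. Move from `x` along a
direction `z`: a first-order expansion of `q` and MSCQ put `x + t z` within
`γ t ‖P(∇q(x) z)‖ + o(t)` of `Γ`, where `P` is the projection onto the normal cone `N_Θ(q(x))`, and
regularity of `x*` then gives `⟪x*, z⟫ ≤ γ ‖x*‖ ‖P(∇q(x) z)‖` for every `z`. Since
`⟪P w, w⟫ = ‖P w‖²`, the right-hand side is the support function of the compact convex set
`{∑ λᵢ ∇qᵢ(x) : λ ∈ N_Θ(q(x)), ‖λ‖ ≤ γ ‖x*‖}`, so by separation `x*` belongs to this set.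
-/

open Asymptotics

theorem mem_of_forall_exists_inner_le {F : Type*} [NormedAddCommGroup F] [InnerProductSpace ℝ F]
    [CompleteSpace F] {K : Set F} (hKc : Convex ℝ K) (hK : IsClosed K) {y : F}
    (h : ∀ z, ∃ k ∈ K, ⟪y, z⟫ ≤ ⟪k, z⟫) : y ∈ K := by
  by_contra hy
  obtain ⟨f, u, hfK, hfy⟩ := geometric_hahn_banach_closed_point hKc hK hy
  obtain ⟨k, hk, hle⟩ := h ((InnerProductSpace.toDual ℝ F).symm f)
  rw [real_inner_comm, InnerProductSpace.toDual_symm_apply, real_inner_comm,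
    InnerProductSpace.toDual_symm_apply] at hle
  linarith [hfK k hk]

theorem nonpos_of_eventually_mul_le_of_isLittleO {c : ℝ} {f : ℝ → ℝ}
    (hf : f =o[𝓝[>] 0] fun t => t) (h : ∀ᶠ t in 𝓝[>] 0, c * t ≤ f t) : c ≤ 0 := by
  by_contra! hc
  obtain ⟨t, hft, hct, ht⟩ :=
    ((hf.def (half_pos hc)).and (h.and self_mem_nhdsWithin)).exists
  rw [Real.norm_eq_abs, Real.norm_eq_abs, abs_of_pos ht] at hft
  nlinarith [le_abs_self (f t)]

section Constraints

variable {n : ℕ} {ι : Type*}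

def constraintVec (q : ι → EuclideanSpace ℝ (Fin n) → ℝ)
    (u : EuclideanSpace ℝ (Fin n)) : EuclideanSpace ℝ ι :=
  WithLp.toLp 2 fun i => q i u

def jacobianApply (q : ι → EuclideanSpace ℝ (Fin n) → ℝ)
    (x z : EuclideanSpace ℝ (Fin n)) : EuclideanSpace ℝ ι :=
  WithLp.toLp 2 fun i => ⟪gradient (q i) x, z⟫

def multiplierCone (I : Finset ι) (q : ι → EuclideanSpace ℝ (Fin n) → ℝ)
    (x : EuclideanSpace ℝ (Fin n)) : Set (EuclideanSpace ℝ ι) :=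
  {lam | ∀ i ∈ I, 0 ≤ lam i ∧ lam i * q i x = 0}

/-- The projection of `w` onto `multiplierCone I q x`, which is the normal cone to `Θ` at `q(x)`
when `E` is the complement of `I`. -/
def normalConeProj [DecidableEq ι] (I : Finset ι)
    (q : ι → EuclideanSpace ℝ (Fin n) → ℝ) (x : EuclideanSpace ℝ (Fin n))
    (w : EuclideanSpace ℝ ι) : EuclideanSpace ℝ ι :=
  WithLp.toLp 2 fun i => if i ∈ I then (if q i x = 0 then max (w i) 0 else 0) else w i

variable {E I : Finset ι} {q : ι → EuclideanSpace ℝ (Fin n) → ℝ} {x : EuclideanSpace ℝ (Fin n)}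

theorem isClosed_multiplierCone : IsClosed (multiplierCone I q x) := by
  simp only [multiplierCone, ofPred_forall]
  exact isClosed_biInter fun i _ =>
    (isClosed_le continuous_const (PiLp.continuous_apply 2 _ i)).inter
      (isClosed_eq ((PiLp.continuous_apply 2 _ i).mul continuous_const) continuous_const)

theorem convex_multiplierCone : Convex ℝ (multiplierCone I q x) := by
  intro u hu v hv a b ha hb _ i hi
  simp only [PiLp.add_apply, PiLp.smul_apply, smul_eq_mul]
  refine ⟨by nlinarith [(hu i hi).1, (hv i hi).1], ?_⟩
  linear_combination a * (hu i hi).2 + b * (hv i hi).2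

theorem smul_mem_multiplierCone {c : ℝ} (hc : 0 ≤ c) {lam : EuclideanSpace ℝ ι}
    (hlam : lam ∈ multiplierCone I q x) : c • lam ∈ multiplierCone I q x := by
  intro i hi
  simp only [PiLp.smul_apply, smul_eq_mul, mul_assoc, (hlam i hi).2, mul_zero, and_true]
  exact mul_nonneg hc (hlam i hi).1

theorem isClosed_feas (hq : ∀ i, Continuous (q i)) : IsClosed (Feas E I q) := by
  simp only [Feas, ofPred_and, ofPred_forall]
  exact (isClosed_biInter fun i _ => isClosed_eq (hq i) continuous_const).inter
    (isClosed_biInter fun i _ => isClosed_le (hq i) continuous_const)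

theorem inner_sum_smul_gradient [Fintype ι] (lam : EuclideanSpace ℝ ι)
    (z : EuclideanSpace ℝ (Fin n)) :
    ⟪∑ i, lam i • gradient (q i) x, z⟫ = ⟪lam, jacobianApply q x z⟫ := by
  rw [sum_inner, PiLp.inner_apply]
  refine Finset.sum_congr rfl fun i _ => ?_
  simp [real_inner_smul_left, jacobianApply, mul_comm]

section Projection

variable [DecidableEq ι]

theorem normalConeProj_mem_multiplierCone (w : EuclideanSpace ℝ ι) :
    normalConeProj I q x w ∈ multiplierCone I q x := by
  intro i hi
  by_cases hqi : q i x = 0 <;> simp [normalConeProj, hi, hqi]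

theorem inner_normalConeProj_self [Fintype ι] (w : EuclideanSpace ℝ ι) :
    ⟪normalConeProj I q x w, w⟫ = ‖normalConeProj I q x w‖ ^ 2 := by
  rw [← real_inner_self_eq_norm_sq, PiLp.inner_apply, PiLp.inner_apply]
  refine Finset.sum_congr rfl fun i _ => ?_
  simp only [normalConeProj, RCLike.inner_apply, conj_trivial]
  split_ifs
  · rcases le_total (w i) 0 with h | h <;> simp [h]
  · simp
  · rfl

theorem eventually_infDist_theta_le [Fintype ι] (hdisj : Disjoint E I) (hx : x ∈ Feas E I q)
    (w : EuclideanSpace ℝ ι) :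
    ∀ᶠ t in 𝓝[>] (0 : ℝ), infDist (constraintVec q x + t • w) (Theta E I) ≤
      t * ‖normalConeProj I q x w‖ := by
  have hinactive : ∀ i ∈ I, ∀ᶠ t in 𝓝[>] (0 : ℝ), q i x < 0 → q i x + t * w i ≤ 0 := by
    intro i _
    by_cases hqi : q i x < 0
    · have hlim : Tendsto (fun t : ℝ => q i x + t * w i) (𝓝 0) (𝓝 (q i x)) := by
        simpa using
          (tendsto_const_nhds (x := q i x)).add ((tendsto_id (x := 𝓝 (0 : ℝ))).mul_const (w i))
      filter_upwards [nhdsWithin_le_nhds (hlim.eventually (eventually_lt_nhds hqi))]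
        with t ht _ using ht.le
    · exact Eventually.of_forall fun _ h => absurd h hqi
  filter_upwards [self_mem_nhdsWithin, (eventually_all_finset I).2 hinactive] with t ht hI
  have hmem : constraintVec q x + t • w - t • normalConeProj I q x w ∈ Theta E I := by
    refine ⟨fun i hi => ?_, fun i hi => ?_⟩
    · simp [constraintVec, normalConeProj, Finset.disjoint_left.mp hdisj hi, hx.1 i hi]
    · by_cases hqi : q i x = 0
      · simp only [constraintVec, normalConeProj, PiLp.sub_apply, PiLp.add_apply,
          PiLp.smul_apply, smul_eq_mul, hi, hqi, if_true]
        nlinarith [le_max_left (w i) 0, mem_Ioi.mp ht]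
      · simp only [constraintVec, normalConeProj, PiLp.sub_apply, PiLp.add_apply,
          PiLp.smul_apply, smul_eq_mul, hi, hqi, if_true, if_false, mul_zero, sub_zero]
        exact hI i hi (lt_of_le_of_ne (hx.2 i hi) hqi)
  calc infDist (constraintVec q x + t • w) (Theta E I)
      ≤ dist (constraintVec q x + t • w)
          (constraintVec q x + t • w - t • normalConeProj I q x w) := infDist_le_dist_of_mem hmem
    _ = t * ‖normalConeProj I q x w‖ := by
        rw [dist_eq_norm, sub_sub_cancel, norm_smul, Real.norm_of_nonneg (mem_Ioi.mp ht).le]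

end Projection

end Constraints

section RegularNormal

variable {F : Type*} [NormedAddCommGroup F] [InnerProductSpace ℝ F]

/-- `v` is a regular normal to `s` at `x` when `⟪v, y - x⟫ ≤ o(‖y - x‖)` as `y → x` in `s`. -/
def regularNormalCone (s : Set F) (x : F) : Set F :=
  {v | (fun y => max ⟪v, y - x⟫ 0) =o[𝓝[s] x] (fun y => y - x)}

/-- Split `⟪v, t z⟫ = ⟪v, y - x⟫ + ⟪v, x + t z - y⟫` with `y ∈ s` nearest to `x + t z`: the first
term is `o(t)` as `y - x = O(t)`, the second at most `‖v‖ (c t + r t)`. -/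
theorem inner_le_of_mem_regularNormalCone [ProperSpace F] {s : Set F} {x v z : F}
    (hs : IsClosed s) (hx : x ∈ s) (hv : v ∈ regularNormalCone s x) {c : ℝ} {r : ℝ → ℝ}
    (hr : r =o[𝓝[>] 0] fun t => t) (hd : ∀ᶠ t in 𝓝[>] 0, infDist (x + t • z) s ≤ c * t + r t) :
    ⟪v, z⟫ ≤ ‖v‖ * c := by
  choose y hys hy using fun t : ℝ => hs.exists_infDist_eq_dist ⟨x, hx⟩ (x + t • z)
  have hyO : (fun t => y t - x) =O[𝓝[>] 0] fun t => t := by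
    refine (IsBigO.of_bound 1 ?_).trans ((isBigO_const_mul_self (‖z‖ + c) _ _).add hr.isBigO)
    filter_upwards [hd, self_mem_nhdsWithin] with t ht htpos
    calc ‖y t - x‖ ≤ ‖x + t • z - x‖ + dist (x + t • z) (y t) := by
          rw [dist_comm, dist_eq_norm, add_comm]
          exact norm_sub_le_norm_sub_add_norm_sub _ _ _
      _ ≤ 1 * ‖(‖z‖ + c) * t + r t‖ := by
          rw [add_sub_cancel_left, norm_smul, Real.norm_of_nonneg (le_of_lt htpos), ← hy,
            one_mul, Real.norm_eq_abs]
          linarith [le_abs_self ((‖z‖ + c) * t + r t)]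
  have hytend : Tendsto y (𝓝[>] 0) (𝓝[s] x) :=
    tendsto_nhdsWithin_iff.2 ⟨tendsto_sub_nhds_zero_iff.1
      (hyO.trans_tendsto (tendsto_id.mono_left nhdsWithin_le_nhds)), Eventually.of_forall hys⟩
  have hnormal : (fun t => max ⟪v, y t - x⟫ 0) =o[𝓝[>] 0] fun t => t :=
    (hv.comp_tendsto hytend).trans_isBigO hyO
  refine sub_nonpos.1 (nonpos_of_eventually_mul_le_of_isLittleO
    (hnormal.add (hr.const_mul_left ‖v‖)) ?_)
  filter_upwards [hd] with t ht
  have hsplit : t * ⟪v, z⟫ = ⟪v, y t - x⟫ + ⟪v, x + t • z - y t⟫ := by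
    rw [← inner_add_right, sub_add_sub_cancel', add_sub_cancel_left, real_inner_smul_right]
  have hcs : ⟪v, x + t • z - y t⟫ ≤ ‖v‖ * (c * t + r t) :=
    (real_inner_le_norm _ _).trans
      (mul_le_mul_of_nonneg_left (by rwa [← dist_eq_norm, ← hy]) (norm_nonneg _))
  nlinarith [le_max_left ⟪v, y t - x⟫ 0]

end RegularNormal

section Multipliers

variable {n : ℕ} {ι : Type*} [Fintype ι] {E I : Finset ι}
  {q : ι → EuclideanSpace ℝ (Fin n) → ℝ} {x xs : EuclideanSpace ℝ (Fin n)}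

/-- `∑ λᵢ qᵢ` vanishes at `x`, is nonpositive on `Γ` and has gradient `x*` at `x`. -/
theorem mem_regularNormalCone_of_mem_Mult [DecidableEq ι] (hunion : E ∪ I = Finset.univ)
    (hq : ∀ i, DifferentiableAt ℝ (q i) x) (hx : x ∈ Feas E I q) {lam : EuclideanSpace ℝ ι}
    (hlam : lam ∈ Mult I q x xs) : xs ∈ regularNormalCone (Feas E I q) x := by
  have hEI : ∀ i, i ∈ E ∨ i ∈ I := fun i => Finset.mem_union.mp (hunion ▸ Finset.mem_univ i)
  set φ : EuclideanSpace ℝ (Fin n) → ℝ := fun y => ∑ i, lam i * q i y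
  have hφ : HasFDerivAt φ (∑ i, lam i • fderiv ℝ (q i) x) x :=
    HasFDerivAt.fun_sum fun i _ => (hq i).hasFDerivAt.const_mul (lam i)
  have hφ' : ∀ h, (∑ i, lam i • fderiv ℝ (q i) x) h = ⟪xs, h⟫ := by
    intro h
    simp [← hlam.1, sum_inner, real_inner_smul_left, inner_gradient_left]
  have hφx : φ x = 0 := Finset.sum_eq_zero fun i _ => by
    rcases hEI i with hi | hi
    · simp [hx.1 i hi]
    · exact (hlam.2 i hi).2
  have hφΓ : ∀ y ∈ Feas E I q, φ y ≤ 0 := fun y hy => Finset.sum_nonpos fun i _ => by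
    rcases hEI i with hi | hi
    · simp [hy.1 i hi]
    · exact mul_nonpos_of_nonneg_of_nonpos (hlam.2 i hi).1 (hy.2 i hi)
  refine (IsBigO.of_bound 1 ?_).trans_isLittleO (hφ.isLittleO.mono nhdsWithin_le_nhds)
  filter_upwards [self_mem_nhdsWithin] with y hy
  rw [hφ', hφx, Real.norm_of_nonneg (le_max_right _ _), one_mul, Real.norm_eq_abs]
  exact max_le (by linarith [hφΓ y hy, neg_abs_le (φ y - 0 - ⟪xs, y - x⟫)]) (abs_nonneg _)

theorem hasDerivAt_constraintVec_line (hq : ∀ i, DifferentiableAt ℝ (q i) x)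
    (z : EuclideanSpace ℝ (Fin n)) :
    HasDerivAt (fun t : ℝ => constraintVec q (x + t • z)) (jacobianApply q x z) 0 := by
  have hline : HasDerivAt (fun t : ℝ => x + t • z) z 0 := by
    simpa using ((hasDerivAt_id (0 : ℝ)).smul_const z).const_add x
  have hcoord : ∀ i, HasDerivAt (fun t : ℝ => q i (x + t • z)) ⟪gradient (q i) x, z⟫ 0 := by
    intro i
    rw [inner_gradient_left]
    exact HasFDerivAt.comp_hasDerivAt (x := (0 : ℝ)) (by simpa using (hq i).hasFDerivAt) hline
  exact (PiLp.hasFDerivAt_toLp 2 _).comp_hasDerivAt 0 (hasDerivAt_pi.2 hcoord)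

theorem exists_mem_Mult_norm_le [DecidableEq ι] {r : ℝ} (hr : 0 ≤ r)
    (h : ∀ z, ⟪xs, z⟫ ≤ r * ‖normalConeProj I q x (jacobianApply q x z)‖) :
    ∃ lam ∈ Mult I q x xs, ‖lam‖ ≤ r := by
  let L : EuclideanSpace ℝ ι →L[ℝ] EuclideanSpace ℝ (Fin n) :=
    ∑ i, (EuclideanSpace.proj i).smulRight (gradient (q i) x)
  have hL : ∀ lam, L lam = ∑ i, lam i • gradient (q i) x := fun lam => by simp [L]
  set S := multiplierCone I q x ∩ closedBall 0 r
  have hS : IsCompact S := (isCompact_closedBall 0 r).inter_left isClosed_multiplierCone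
  have hxs : xs ∈ L '' S := by
    refine mem_of_forall_exists_inner_le
      ((convex_multiplierCone.inter (convex_closedBall 0 r)).linear_image L.toLinearMap)
      (hS.image L.continuous).isClosed fun z => ?_
    set p := normalConeProj I q x (jacobianApply q x z)
    have hc : 0 ≤ r / ‖p‖ := by positivity
    refine ⟨L ((r / ‖p‖) • p), mem_image_of_mem _ ⟨?_, ?_⟩, ?_⟩
    · exact smul_mem_multiplierCone hc (normalConeProj_mem_multiplierCone _)
    · rw [mem_closedBall_zero_iff, norm_smul, Real.norm_of_nonneg hc]
      rcases eq_or_ne ‖p‖ 0 with hp | hp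
      · simpa [hp] using hr
      · rw [div_mul_cancel₀ r hp]
    · rw [hL, inner_sum_smul_gradient, real_inner_smul_left, inner_normalConeProj_self]
      calc ⟪xs, z⟫ ≤ r * ‖p‖ := h z
        _ = r / ‖p‖ * ‖p‖ ^ 2 := by
          rcases eq_or_ne ‖p‖ 0 with hp | hp
          · simp [hp]
          · field_simp
  obtain ⟨lam, ⟨hcone, hball⟩, hlam⟩ := hxs
  exact ⟨lam, ⟨hL lam ▸ hlam, hcone⟩, mem_closedBall_zero_iff.mp hball⟩

end Multipliers

section MSCQ

variable {n : ℕ} {ι : Type*} [Fintype ι] [DecidableEq ι] {E I : Finset ι}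
  {q : ι → EuclideanSpace ℝ (Fin n) → ℝ} {x xs : EuclideanSpace ℝ (Fin n)} {γ : ℝ}

theorem eventually_infDist_feas_le (hdisj : Disjoint E I) (hx : x ∈ Feas E I q) (hγ : 0 ≤ γ)
    (hmscq : MSCQat E I q x γ) (z : EuclideanSpace ℝ (Fin n)) (w : EuclideanSpace ℝ ι) :
    ∀ᶠ t in 𝓝[>] (0 : ℝ), infDist (x + t • z) (Feas E I q) ≤
      γ * ‖normalConeProj I q x w‖ * t +
        γ * ‖constraintVec q (x + t • z) - (constraintVec q x + t • w)‖ := by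
  obtain ⟨U, hU, hmetric⟩ := hmscq
  have hline : Tendsto (fun t : ℝ => x + t • z) (𝓝[>] 0) (𝓝 x) := by
    simpa using ((tendsto_id (x := 𝓝 (0 : ℝ))).smul_const z).const_add x |>.mono_left
      nhdsWithin_le_nhds
  filter_upwards [hline.eventually hU, eventually_infDist_theta_le hdisj hx w] with t htU htheta
  calc infDist (x + t • z) (Feas E I q)
      ≤ γ * infDist (constraintVec q (x + t • z)) (Theta E I) := hmetric _ htU
    _ ≤ γ * (t * ‖normalConeProj I q x w‖ +
          ‖constraintVec q (x + t • z) - (constraintVec q x + t • w)‖) := by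
      gcongr
      rw [← dist_eq_norm]
      linarith [infDist_le_infDist_add_dist (x := constraintVec q (x + t • z))
        (y := constraintVec q x + t • w) (s := Theta E I)]
    _ = _ := by ring

theorem inner_le_of_mscq (hdisj : Disjoint E I) (hqc : ∀ i, Continuous (q i))
    (hqd : ∀ i, DifferentiableAt ℝ (q i) x) (hx : x ∈ Feas E I q) (hγ : 0 ≤ γ)
    (hmscq : MSCQat E I q x γ) (hxs : xs ∈ regularNormalCone (Feas E I q) x)
    (z : EuclideanSpace ℝ (Fin n)) :
    ⟪xs, z⟫ ≤ γ * ‖xs‖ * ‖normalConeProj I q x (jacobianApply q x z)‖ := by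
  have hexpand : (fun t : ℝ => ‖constraintVec q (x + t • z) -
      (constraintVec q x + t • jacobianApply q x z)‖) =o[𝓝[>] 0] fun t => t := by
    simpa [sub_sub] using
      ((hasDerivAt_constraintVec_line hqd z).isLittleO.mono nhdsWithin_le_nhds).norm_left
  have := inner_le_of_mem_regularNormalCone (isClosed_feas hqc) hx hxs
    (hexpand.const_mul_left γ) (eventually_infDist_feas_le hdisj hx hγ hmscq z _)
  linarith

end MSCQ

theorem multiplier_bound_general
    {n : ℕ} {ι : Type*} [Fintype ι] [DecidableEq ι]
    (E I : Finset ι) (hdisj : Disjoint E I) (hunion : E ∪ I = Finset.univ)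
    (q : ι → EuclideanSpace ℝ (Fin n) → ℝ) (hq : ∀ i, ContDiff ℝ 2 (q i))
    (x xs : EuclideanSpace ℝ (Fin n)) (hfeas : x ∈ Feas E I q)
    (γ : ℝ) (hγ : 0 < γ) (hmscq : MSCQat E I q x γ)
    (hne : (Mult I q x xs).Nonempty) :
    ∃ lam ∈ Mult I q x xs, ‖lam‖ ≤ γ * ‖xs‖ := by
  have hdiff : ∀ i, Differentiable ℝ (q i) := fun i => (hq i).differentiable two_ne_zero
  obtain ⟨lam, hlam⟩ := hne
  have hnormal := mem_regularNormalCone_of_mem_Mult hunion (fun i => hdiff i x) hfeas hlam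
  exact exists_mem_Mult_norm_le (by positivity) fun z =>
    inner_le_of_mscq hdisj (fun i => (hdiff i).continuous) (fun i => hdiff i x) hfeas hγ.le
      hmscq hnormal z

/-- **Multiplier bound under MSCQ.** If MSCQ holds at `x ∈ Γ` with modulus `γ > 0` and
`Λ(x, x*) ≠ ∅`, then some `λ ∈ Λ(x, x*)` satisfies `‖λ‖ ≤ γ‖x*‖`. -/
theorem multiplier_bound
    {n : ℕ} {ι : Type*} [Fintype ι] [DecidableEq ι] [Nonempty ι]
    (E I : Finset ι) (hdisj : Disjoint E I) (hunion : E ∪ I = Finset.univ)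
    (q : ι → EuclideanSpace ℝ (Fin n) → ℝ) (hq : ∀ i, ContDiff ℝ 2 (q i))
    (x xs : EuclideanSpace ℝ (Fin n)) (hfeas : x ∈ Feas E I q)
    (γ : ℝ) (hγ : 0 < γ) (hmscq : MSCQat E I q x γ)
    (hne : (Mult I q x xs).Nonempty) :
    ∃ lam ∈ Mult I q x xs, ‖lam‖ ≤ γ * ‖xs‖ :=
  multiplier_bound_general E I hdisj hunion q hq x xs hfeas γ hγ hmscq hne

end
end
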